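/- arXiv:2201.05133 — 3 statements merged into one kernel-verified Lean document; each statement's English description precedes it below -/
import Mathlib

section
/- Fix a graph G, a list-assignment L for G, two L-colorings α and β of G, and a vertex v of G such that |L(v)| ≥ d_G(v) + 2; let G' := G − v. If σ' is an L-recoloring sequence for G' transforming the restriction of α to G' into the restriction of β to G', and σ' recolors the vertices of N_G(v) a total of t times, then σ' can be extended to an L-recoloring sequence for G transforming α into β that recolors v at most ⌈t/(|L(v)| − d_G(v) − 1)⌉ + 1 times. -/
variable {V : Type} [Fintype V] [DecidableEq V]

/-- Apply a list of recoloring steps (vertex, new color) to a coloring, one by one. -/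
def applySteps (α : V → ℕ) : List (V × ℕ) → (V → ℕ)
  | [] => α
  | q :: σ => applySteps (Function.update α q.1 q.2) σ

/-- `f` is a proper `L`-coloring of the subgraph of `G` induced on the vertex set `s`. -/
def ProperOn (G : SimpleGraph V) (L : V → Finset ℕ) (s : Set V) (f : V → ℕ) : Prop :=
  (∀ v ∈ s, f v ∈ L v) ∧ ∀ u ∈ s, ∀ v ∈ s, G.Adj u v → f u ≠ f v

/-- `σ` is an `L`-recoloring sequence for the subgraph of `G` induced on `s`,
starting from the coloring `α`: every step recolors a vertex of `s`, and every
intermediate coloring (including the initial and final ones) is a proper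
`L`-coloring of the induced subgraph. -/
def RecolSeqOn (G : SimpleGraph V) (L : V → Finset ℕ) (s : Set V) (α : V → ℕ)
    (σ : List (V × ℕ)) : Prop :=
  (∀ q ∈ σ, q.1 ∈ s) ∧ ∀ n ≤ σ.length, ProperOn G L s (applySteps α (σ.take n))

/-- The number of times the recoloring sequence `σ` recolors the vertex `v`. -/
def recolors (σ : List (V × ℕ)) (v : V) : ℕ :=
  σ.countP (fun q => decide (q.1 = v))


set_option linter.unusedSectionVars false

section Basics

lemma applySteps_append (α : V → ℕ) (l₁ l₂ : List (V × ℕ)) :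
    applySteps α (l₁ ++ l₂) = applySteps (applySteps α l₁) l₂ := by
  induction l₁ generalizing α with
  | nil => rfl
  | cons q l ih => simp [applySteps, ih]

lemma recolSeqOn_nil {G : SimpleGraph V} {L : V → Finset ℕ} {s : Set V} {α : V → ℕ} :
    RecolSeqOn G L s α [] ↔ ProperOn G L s α := by
  constructor
  · intro h; simpa [applySteps] using h.2 0 (by simp)
  · intro h
    refine ⟨by simp, ?_⟩
    intro n hn
    obtain rfl : n = 0 := Nat.le_zero.1 (by simpa using hn)
    simpa [applySteps] using h

lemma recolSeqOn_cons {G : SimpleGraph V} {L : V → Finset ℕ} {s : Set V} {α : V → ℕ}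
    {q : V × ℕ} {σ : List (V × ℕ)} :
    RecolSeqOn G L s α (q :: σ) ↔
      q.1 ∈ s ∧ ProperOn G L s α ∧ RecolSeqOn G L s (Function.update α q.1 q.2) σ := by
  constructor
  · rintro ⟨h1, h2⟩
    refine ⟨h1 q (List.mem_cons_self), ?_, ?_, ?_⟩
    · simpa [applySteps] using h2 0 (by simp)
    · exact fun p hp => h1 p (List.mem_cons_of_mem _ hp)
    · intro n hn
      have := h2 (n+1) (by simpa using Nat.succ_le_succ hn)
      simpa [applySteps] using this
  · rintro ⟨hq, hα, h1, h2⟩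
    refine ⟨?_, ?_⟩
    · intro p hp
      rcases List.mem_cons.1 hp with rfl | hp
      · exact hq
      · exact h1 p hp
    · intro n hn
      cases n with
      | zero => simpa [applySteps] using hα
      | succ n =>
        have := h2 n (by simpa using hn)
        simpa [applySteps] using this

lemma RecolSeqOn.proper {G : SimpleGraph V} {L : V → Finset ℕ} {s : Set V} {α : V → ℕ}
    {σ : List (V × ℕ)} (h : RecolSeqOn G L s α σ) : ProperOn G L s α := by
  simpa [applySteps] using h.2 0 (by simp)

lemma RecolSeqOn.proper_final {G : SimpleGraph V} {L : V → Finset ℕ} {s : Set V} {α : V → ℕ}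
    {σ : List (V × ℕ)} (h : RecolSeqOn G L s α σ) : ProperOn G L s (applySteps α σ) := by
  simpa using h.2 σ.length le_rfl

lemma RecolSeqOn.append {G : SimpleGraph V} {L : V → Finset ℕ} {s : Set V} {α : V → ℕ}
    {σ₁ σ₂ : List (V × ℕ)} (h1 : RecolSeqOn G L s α σ₁)
    (h2 : RecolSeqOn G L s (applySteps α σ₁) σ₂) :
    RecolSeqOn G L s α (σ₁ ++ σ₂) := by
  induction σ₁ generalizing α with
  | nil => simpa [applySteps] using h2
  | cons q l ih =>
    rw [recolSeqOn_cons] at h1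
    rw [List.cons_append, recolSeqOn_cons]
    exact ⟨h1.1, h1.2.1, ih h1.2.2 (by simpa [applySteps] using h2)⟩

end Basics

section Congr

lemma applySteps_agree {v : V} {γ₁ γ₂ : V → ℕ} (h : ∀ w, w ≠ v → γ₁ w = γ₂ w)
    (l : List (V × ℕ)) : ∀ w, w ≠ v → applySteps γ₁ l w = applySteps γ₂ l w := by
  induction l generalizing γ₁ γ₂ with
  | nil => exact h
  | cons q l ih =>
    refine ih ?_
    intro w hw
    by_cases hq : w = q.1
    · subst hq; simp
    · simp [Function.update_of_ne hq, h w hw]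

lemma properOn_congr {G : SimpleGraph V} {L : V → Finset ℕ} {s : Set V} {f g : V → ℕ}
    (h : ∀ w ∈ s, f w = g w) (hf : ProperOn G L s f) : ProperOn G L s g := by
  constructor
  · intro w hw; rw [← h w hw]; exact hf.1 w hw
  · intro a ha b hb hab
    rw [← h a ha, ← h b hb]; exact hf.2 a ha b hb hab

lemma recolSeqOn_congr {G : SimpleGraph V} {L : V → Finset ℕ} {v : V} {γ₁ γ₂ : V → ℕ}
    (h : ∀ w, w ≠ v → γ₁ w = γ₂ w) {σ : List (V × ℕ)}
    (hσ : RecolSeqOn G L {u | u ≠ v} γ₁ σ) : RecolSeqOn G L {u | u ≠ v} γ₂ σ := by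
  refine ⟨hσ.1, fun n hn => ?_⟩
  exact properOn_congr (fun w hw => applySteps_agree h _ w hw) (hσ.2 n hn)

lemma properOn_mono {G : SimpleGraph V} {L : V → Finset ℕ} {s s' : Set V} {f : V → ℕ}
    (hs : s' ⊆ s) (hf : ProperOn G L s f) : ProperOn G L s' f :=
  ⟨fun w hw => hf.1 w (hs hw), fun a ha b hb hab => hf.2 a (hs ha) b (hs hb) hab⟩

lemma properOn_univ_of {G : SimpleGraph V} {L : V → Finset ℕ} {v : V} {f : V → ℕ}
    (h1 : f v ∈ L v) (h2 : ∀ u, G.Adj v u → f v ≠ f u)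
    (h3 : ProperOn G L {u | u ≠ v} f) : ProperOn G L Set.univ f := by
  constructor
  · intro w _
    by_cases hw : w = v
    · subst hw; exact h1
    · exact h3.1 w hw
  · intro a _ b _ hab
    by_cases ha : a = v
    · subst ha; exact h2 b hab
    · by_cases hb : b = v
      · subst hb; exact (h2 a hab.symm).symm
      · exact h3.2 a ha b hb hab

end Congr

section Pick

variable (G : SimpleGraph V) [DecidableRel G.Adj] (L : V → Finset ℕ) (v : V)

/-- Forbidden colors for `v`: current colors of its neighbors, plus the next `k`
colors to which neighbors of `v` will be recolored. -/
def forb (γ : V → ℕ) (σ : List (V × ℕ)) (k : ℕ) : Finset ℕ :=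
  (G.neighborFinset v).image γ ∪
    (((σ.filter fun q => decide (G.Adj v q.1)).take k).map Prod.snd).toFinset

noncomputable def pick (γ : V → ℕ) (σ : List (V × ℕ)) (k : ℕ) : ℕ :=
  if h : (L v \ forb G v γ σ k).Nonempty then h.choose else 0

lemma pick_mem {γ : V → ℕ} {σ : List (V × ℕ)} {k : ℕ}
    (hcard : G.degree v + k + 1 ≤ (L v).card) :
    pick G L v γ σ k ∈ L v \ forb G v γ σ k := by
  have hforb : (forb G v γ σ k).card ≤ G.degree v + k := by
    refine le_trans (Finset.card_union_le _ _) (Nat.add_le_add ?_ ?_)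
    · exact le_trans (Finset.card_image_le) (le_of_eq (G.card_neighborFinset_eq_degree v))
    · refine le_trans (List.toFinset_card_le _) ?_
      simpa using List.length_take_le k _
  have h : (L v \ forb G v γ σ k).Nonempty := by
    rw [← Finset.card_pos]
    have := Finset.le_card_sdiff (forb G v γ σ k) (L v)
    omega
  rw [pick, dif_pos h]
  exact h.choose_spec

end Pick

section Ext

variable (G : SimpleGraph V) [DecidableRel G.Adj] (L : V → Finset ℕ) (v : V)

/-- The extension of a recoloring sequence avoiding `v` to one including `v`:
whenever a step would conflict with the current color of `v`, first recolor `v`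
to a color avoiding all neighbors' colors and the next `k` upcoming colors of
neighbors. -/
noncomputable def ext (k : ℕ) : List (V × ℕ) → (V → ℕ) → List (V × ℕ)
  | [], _ => []
  | q :: rest, γ =>
    if G.Adj v q.1 ∧ q.2 = γ v then
      (v, pick G L v γ (q :: rest) k) :: q ::
        ext k rest (Function.update (Function.update γ v (pick G L v γ (q :: rest) k)) q.1 q.2)
    else q :: ext k rest (Function.update γ q.1 q.2)

lemma ext_filter (k : ℕ) : ∀ (σ' : List (V × ℕ)) (γ : V → ℕ), (∀ q ∈ σ', q.1 ≠ v) →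
    (ext G L v k σ' γ).filter (fun q => decide (q.1 ≠ v)) = σ' := by
  intro σ'
  induction σ' with
  | nil => intro γ _; rfl
  | cons q rest ih =>
    intro γ hne
    have hq : q.1 ≠ v := hne q (List.mem_cons_self)
    have hrest : ∀ p ∈ rest, p.1 ≠ v := fun p hp => hne p (List.mem_cons_of_mem _ hp)
    rw [ext]
    split
    · rw [List.filter_cons_of_neg (by simp), List.filter_cons_of_pos (by simp [hq]),
        ih _ hrest]
    · rw [List.filter_cons_of_pos (by simp [hq]), ih _ hrest]

lemma ext_apply (k : ℕ) : ∀ (σ' : List (V × ℕ)) (γ : V → ℕ), (∀ q ∈ σ', q.1 ≠ v) →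
    ∀ u, u ≠ v → applySteps γ (ext G L v k σ' γ) u = applySteps γ σ' u := by
  intro σ'
  induction σ' with
  | nil => intro γ _ u hu; rfl
  | cons q rest ih =>
    intro γ hne u hu
    have hq : q.1 ≠ v := hne q (List.mem_cons_self)
    have hrest : ∀ p ∈ rest, p.1 ≠ v := fun p hp => hne p (List.mem_cons_of_mem _ hp)
    rw [ext]
    split
    · simp only [applySteps]
      rw [ih _ hrest u hu]
      exact applySteps_agree (v := v)
        (fun w hw => by
          by_cases hwq : w = q.1
          · subst hwq; simp
          · simp [Function.update_of_ne hwq, Function.update_of_ne hw]) rest u hu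
    · simp only [applySteps]
      exact ih _ hrest u hu

end Ext

section ExtProper

variable (G : SimpleGraph V) [DecidableRel G.Adj] (L : V → Finset ℕ) (v : V)

lemma ext_proper (k : ℕ) (hk : 1 ≤ k) (hcard : G.degree v + k + 1 ≤ (L v).card) :
    ∀ (σ' : List (V × ℕ)) (γ : V → ℕ),
      (∀ q ∈ σ', q.1 ≠ v) → ProperOn G L Set.univ γ →
      RecolSeqOn G L {u | u ≠ v} γ σ' →
      RecolSeqOn G L Set.univ γ (ext G L v k σ' γ) := by
  intro σ'
  induction σ' with
  | nil => intro γ _ hγ _; rw [ext]; exact recolSeqOn_nil.2 hγ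
  | cons q rest ih =>
    intro γ hne hγ hseq
    have hq : q.1 ≠ v := hne q (List.mem_cons_self)
    have hrest : ∀ p ∈ rest, p.1 ≠ v := fun p hp => hne p (List.mem_cons_of_mem _ hp)
    rw [recolSeqOn_cons] at hseq
    obtain ⟨-, -, hseq⟩ := hseq
    have hupd : ProperOn G L {u | u ≠ v} (Function.update γ q.1 q.2) := hseq.proper
    rw [ext]
    split
    · rename_i htrig
      set c := pick G L v γ (q :: rest) k with hc
      have hcmem := pick_mem G L v (γ := γ) (σ := q :: rest) (k := k) hcard
      rw [← hc, Finset.mem_sdiff, forb, Finset.mem_union] at hcmem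
      push_neg at hcmem
      obtain ⟨hcL, hcnbr, hcup⟩ := hcmem
      have hc1 : ∀ u, G.Adj v u → c ≠ γ u := by
        intro u hu h
        exact hcnbr (Finset.mem_image.2 ⟨u, (SimpleGraph.mem_neighborFinset _ _ _).2 hu, h.symm⟩)
      obtain ⟨m, rfl⟩ : ∃ m, k = m + 1 := ⟨k - 1, (Nat.succ_pred_eq_of_pos hk).symm⟩
      have hfilt : (q :: rest).filter (fun p => decide (G.Adj v p.1)) =
          q :: rest.filter (fun p => decide (G.Adj v p.1)) :=
        List.filter_cons_of_pos (by simpa using htrig.1)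
      have hc2 : c ≠ q.2 := by
        intro h
        apply hcup
        rw [List.mem_toFinset]
        exact List.mem_map.2 ⟨q, by rw [hfilt]; simp, h.symm⟩
      have hγ1 : ProperOn G L Set.univ (Function.update γ v c) := by
        refine properOn_univ_of (v := v) ?_ ?_ ?_
        · simpa using hcL
        · intro u hu
          have huv : u ≠ v := hu.ne'
          simpa [Function.update_of_ne huv] using hc1 u hu
        · refine properOn_congr (fun w hw => ?_) (properOn_mono (fun x _ => trivial) hγ)
          exact (Function.update_of_ne hw c γ).symm
      have hγ''v : Function.update (Function.update γ v c) q.1 q.2 v = c := by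
        rw [Function.update_of_ne (Ne.symm hq), Function.update_self]
      have hagree : ∀ w, w ≠ v →
          Function.update γ q.1 q.2 w = Function.update (Function.update γ v c) q.1 q.2 w := by
        intro w hw
        by_cases hwq : w = q.1
        · subst hwq; simp
        · rw [Function.update_of_ne hwq, Function.update_of_ne hwq, Function.update_of_ne hw]
      have hγ2 : ProperOn G L Set.univ (Function.update (Function.update γ v c) q.1 q.2) := by
        refine properOn_univ_of (v := v) ?_ ?_ ?_
        · rw [hγ''v]; exact hcL
        · intro u hu
          rw [hγ''v]
          by_cases huq : u = q.1
          · subst huq; rw [Function.update_self]; exact hc2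
          · rw [Function.update_of_ne huq, Function.update_of_ne hu.ne']
            exact hc1 u hu
        · exact properOn_congr (fun w hw => hagree w hw) hupd
      rw [recolSeqOn_cons]
      refine ⟨trivial, hγ, ?_⟩
      rw [recolSeqOn_cons]
      exact ⟨trivial, hγ1, ih _ hrest hγ2 (recolSeqOn_congr hagree hseq)⟩
    · rename_i htrig
      push_neg at htrig
      rw [recolSeqOn_cons]
      refine ⟨trivial, hγ, ih _ hrest ?_ hseq⟩
      refine properOn_univ_of (v := v) ?_ ?_ hupd
      · rw [Function.update_of_ne (Ne.symm hq)]
        exact hγ.1 v trivial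
      · intro u hu
        rw [Function.update_of_ne (Ne.symm hq)]
        by_cases huq : u = q.1
        · subst huq
          rw [Function.update_self]
          exact fun h => htrig hu h.symm
        · rw [Function.update_of_ne huq]
          exact hγ.2 v trivial u trivial hu

end ExtProper

section ExtCount

variable (G : SimpleGraph V) [DecidableRel G.Adj] (L : V → Finset ℕ) (v : V)

lemma recolors_cons_self (c : ℕ) (l : List (V × ℕ)) :
    recolors ((v, c) :: l) v = recolors l v + 1 := by
  simp [recolors, List.countP_cons]

lemma recolors_cons_ne {q : V × ℕ} (hq : q.1 ≠ v) (l : List (V × ℕ)) :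
    recolors (q :: l) v = recolors l v := by
  simp [recolors, List.countP_cons, hq]

lemma ext_count (k : ℕ) (hk : 1 ≤ k) (hcard : G.degree v + k + 1 ≤ (L v).card) :
    ∀ (σ' : List (V × ℕ)) (γ : V → ℕ) (j : ℕ),
      (∀ q ∈ σ', q.1 ≠ v) →
      (∀ p ∈ (σ'.filter fun q => decide (G.Adj v q.1)).take j, p.2 ≠ γ v) →
      recolors (ext G L v k σ' γ) v = 0 ∨
        k * recolors (ext G L v k σ' γ) v + j + 1 ≤
          σ'.countP (fun q => decide (G.Adj v q.1)) + k := by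
  intro σ'
  induction σ' with
  | nil => intro γ j _ _; left; rw [ext]; rfl
  | cons q rest ih =>
    intro γ j hne hj
    have hq : q.1 ≠ v := hne q (List.mem_cons_self)
    have hrest : ∀ p ∈ rest, p.1 ≠ v := fun p hp => hne p (List.mem_cons_of_mem _ hp)
    have hγv : Function.update γ q.1 q.2 v = γ v := Function.update_of_ne (Ne.symm hq) _ _
    rw [ext]
    split
    · rename_i htrig
      set c := pick G L v γ (q :: rest) k with hc
      have hcmem := pick_mem G L v (γ := γ) (σ := q :: rest) (k := k) hcard
      rw [← hc, Finset.mem_sdiff, forb, Finset.mem_union] at hcmem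
      push_neg at hcmem
      obtain ⟨-, -, hcup⟩ := hcmem
      obtain ⟨m, rfl⟩ : ∃ m, k = m + 1 := ⟨k - 1, (Nat.succ_pred_eq_of_pos hk).symm⟩
      have hfilt : (q :: rest).filter (fun p => decide (G.Adj v p.1)) =
          q :: rest.filter (fun p => decide (G.Adj v p.1)) :=
        List.filter_cons_of_pos (by simpa using htrig.1)
      -- j must be 0 (otherwise hj contradicts the trigger)
      have hj0 : j = 0 := by
        by_contra hjne
        obtain ⟨i, rfl⟩ : ∃ i, j = i + 1 := ⟨j - 1, (Nat.succ_pred_eq_of_pos (Nat.pos_of_ne_zero hjne)).symm⟩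
        refine hj q ?_ htrig.2
        rw [hfilt, List.take_succ_cons]
        exact List.mem_cons_self
      subst hj0
      set γ'' := Function.update (Function.update γ v c) q.1 q.2 with hγ''
      have hγ''v : γ'' v = c := by
        rw [hγ'', Function.update_of_ne (Ne.symm hq), Function.update_self]
      have hrec := ih γ'' m hrest (by
        intro p hp hpc
        apply hcup
        rw [List.mem_toFinset]
        refine List.mem_map.2 ⟨p, ?_, by rw [hpc, hγ''v]⟩
        rw [hfilt, List.take_succ_cons]
        exact List.mem_cons_of_mem _ hp)
      rw [recolors_cons_self, recolors_cons_ne v hq]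
      have hcount : (q :: rest).countP (fun p => decide (G.Adj v p.1)) =
          rest.countP (fun p => decide (G.Adj v p.1)) + 1 := by
        rw [List.countP_cons]
        simp [htrig.1]
      rw [hcount]
      have hmul : (m + 1) * (recolors (ext G L v (m+1) rest γ'') v + 1) =
          (m + 1) * recolors (ext G L v (m+1) rest γ'') v + (m + 1) := Nat.mul_succ _ _
      rcases hrec with h | h
      · right; rw [hmul, h]; omega
      · right
        have : (m + 1) * recolors (ext G L v (m+1) rest γ'') v ≤
            rest.countP (fun p => decide (G.Adj v p.1)) := by omega
        omega
    · rename_i htrig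
      rw [recolors_cons_ne v hq]
      by_cases hadj : G.Adj v q.1
      · have hfilt : (q :: rest).filter (fun p => decide (G.Adj v p.1)) =
            q :: rest.filter (fun p => decide (G.Adj v p.1)) :=
          List.filter_cons_of_pos (by simpa using hadj)
        have hcount : (q :: rest).countP (fun p => decide (G.Adj v p.1)) =
            rest.countP (fun p => decide (G.Adj v p.1)) + 1 := by
          rw [List.countP_cons]; simp [hadj]
        cases j with
        | zero =>
          have hrec := ih (Function.update γ q.1 q.2) 0 hrest (by simp)
          rw [hcount]
          rcases hrec with h | h
          · left; exact h
          · right; omega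
        | succ i =>
          have hrec := ih (Function.update γ q.1 q.2) i hrest (by
            intro p hp
            rw [hγv]
            refine hj p ?_
            rw [hfilt, List.take_succ_cons]
            exact List.mem_cons_of_mem _ hp)
          rw [hcount]
          rcases hrec with h | h
          · left; exact h
          · right; omega
      · have hfilt : (q :: rest).filter (fun p => decide (G.Adj v p.1)) =
            rest.filter (fun p => decide (G.Adj v p.1)) :=
          List.filter_cons_of_neg (by simpa using hadj)
        have hcount : (q :: rest).countP (fun p => decide (G.Adj v p.1)) =
            rest.countP (fun p => decide (G.Adj v p.1)) := by
          rw [List.countP_cons]; simp [hadj]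
        have hrec := ih (Function.update γ q.1 q.2) j hrest (by
          intro p hp
          rw [hγv]
          exact hj p (by rwa [hfilt]))
        rw [hcount]
        exact hrec

end ExtCount

/-- **Key Lemma.**  Fix a graph `G`, a list-assignment `L`, `L`-colorings `α`, `β`,
and a vertex `v` with `|L(v)| ≥ d_G(v) + 2`.  If `σ'` is an `L`-recoloring sequence
for `G' := G − v` transforming `α↾G'` into `β↾G'` and recoloring the vertices of
`N_G(v)` a total of `t` times, then `σ'` extends to an `L`-recoloring sequence for
`G` transforming `α` into `β` that recolors `v` at most
`⌈t/(|L(v)| − d_G(v) − 1)⌉ + 1` times. -/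
theorem key_lemma (G : SimpleGraph V) [DecidableRel G.Adj] (L : V → Finset ℕ)
    (α β : V → ℕ)
    (hα : ProperOn G L Set.univ α) (hβ : ProperOn G L Set.univ β)
    (v : V) (hL : G.degree v + 2 ≤ (L v).card)
    (σ' : List (V × ℕ)) (t : ℕ)
    (hσ' : RecolSeqOn G L {u | u ≠ v} α σ')
    (hσ'end : ∀ u, u ≠ v → applySteps α σ' u = β u)
    (ht : σ'.countP (fun q => decide (G.Adj v q.1)) = t) :
    ∃ σ : List (V × ℕ),
      RecolSeqOn G L Set.univ α σ ∧
      applySteps α σ = β ∧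
      σ.filter (fun q => decide (q.1 ≠ v)) = σ' ∧
      (recolors σ v : ℤ) ≤
        ⌈(t : ℚ) / (((L v).card : ℚ) - (G.degree v : ℚ) - 1)⌉ + 1 := by
  set k := (L v).card - G.degree v - 1 with hkdef
  have hk : 1 ≤ k := by omega
  have hcard : G.degree v + k + 1 ≤ (L v).card := by omega
  have hne : ∀ q ∈ σ', q.1 ≠ v := hσ'.1
  have hextseq := ext_proper G L v k hk hcard σ' α hne hα hσ'
  set E := ext G L v k σ' α with hE
  have hoffv : ∀ u, u ≠ v → applySteps α E u = β u := fun u hu => by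
    rw [hE, ext_apply G L v k σ' α hne u hu]; exact hσ'end u hu
  have hupdβ : Function.update (applySteps α E) v (β v) = β := by
    funext w
    by_cases hw : w = v
    · subst hw; simp
    · rw [Function.update_of_ne hw]; exact hoffv w hw
  have hDpos : (0:ℚ) < ((L v).card : ℚ) - (G.degree v : ℚ) - 1 := by
    have : (G.degree v : ℚ) + 2 ≤ ((L v).card : ℚ) := by exact_mod_cast hL
    linarith
  have hceil : (0:ℤ) ≤ ⌈(t : ℚ) / (((L v).card : ℚ) - (G.degree v : ℚ) - 1)⌉ :=
    Int.ceil_nonneg (div_nonneg (by positivity) (le_of_lt hDpos))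
  have hD : ((L v).card : ℚ) - (G.degree v : ℚ) - 1 = (k : ℚ) := by
    have h1 : (L v).card = G.degree v + k + 1 := by omega
    rw [h1]; push_cast; ring
  refine ⟨E ++ [(v, β v)], ?_, ?_, ?_, ?_⟩
  · refine hextseq.append ?_
    rw [recolSeqOn_cons]
    refine ⟨trivial, hextseq.proper_final, recolSeqOn_nil.2 ?_⟩
    show ProperOn G L Set.univ (Function.update (applySteps α E) v (β v))
    rw [hupdβ]; exact hβ
  · rw [applySteps_append]
    show Function.update (applySteps α E) v (β v) = β
    exact hupdβ
  · rw [List.filter_append, hE, ext_filter G L v k σ' α hne]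
    simp
  · have hrec : recolors (E ++ [(v, β v)]) v = recolors E v + 1 := by
      simp [recolors, List.countP_append]
    rw [hrec]
    have hcnt := ext_count G L v k hk hcard σ' α 0 hne (by simp)
    rw [← hE, ht] at hcnt
    rcases hcnt with h0 | h1
    · rw [h0]
      push_cast
      omega
    · have hrk : k * recolors E v < t + k := by omega
      have h2 : (recolors E v : ℤ) - 1 <
          ⌈(t : ℚ) / (((L v).card : ℚ) - (G.degree v : ℚ) - 1)⌉ := by
        rw [Int.lt_ceil, hD]
        rw [lt_div_iff₀ (by exact_mod_cast Nat.lt_of_lt_of_le Nat.zero_lt_one hk)]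
        have hcast : (k : ℚ) * (recolors E v : ℚ) < (t : ℚ) + (k : ℚ) := by
          exact_mod_cast hrk
        push_cast
        nlinarith [hcast]
      omega
end

section
/- Every finite graph G with mad(G) < 17/5 contains (i) a vertex of degree at most 2, or (ii) a vertex of degree 3 with at least two neighbors of degree 3, or (iii) a vertex of degree 4 with four neighbors of degree 3. -/
variable {V : Type} [Fintype V] [DecidableEq V]

/-- `mad(G) < q`: every nonempty subgraph `H` of `G` satisfies `2|E(H)| < q·|V(H)|`
(it suffices to consider induced subgraphs, and `2|E(H)|` is counted here as the
number of ordered adjacent pairs inside the vertex set `s` of `H`). -/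
def MadLT (G : SimpleGraph V) [DecidableRel G.Adj] (q : ℚ) : Prop :=
  ∀ s : Finset V, s.Nonempty →
    ((((s ×ˢ s).filter fun p => G.Adj p.1 p.2).card : ℚ) < q * s.card)

/-!
Discharging. Give every vertex `v` the charge `5 deg v`; since `mad(G) < 17/5`, the total charge
`5 ∑ deg` is less than `17 |V|`. Let every vertex of degree at least 4 send `1` to each neighbour
of degree 3. If none of the three configurations occurs, then every degree is at least 3, a vertex
of degree 3 has at least two neighbours of degree at least 4 and ends with at least `15 + 2`, a
vertex of degree 4 sends at most 3 and ends with at least `20 - 3`, and a vertex of degree `d ≥ 5`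
sends at most `d` and ends with at least `4d > 17`. Charge is only moved around, so the total
would be at least `17 |V|`.
-/

open Finset

section Discharging

variable {α M : Type*} [Fintype α] [AddCommGroup M]

/-- The charge after every `u` has sent `t u v` to every `v`. -/
def discharge (c : α → M) (t : α → α → M) (v : α) : M :=
  c v + ∑ u, t u v - ∑ u, t v u

theorem sum_discharge (c : α → M) (t : α → α → M) : ∑ v, discharge c t v = ∑ v, c v := by
  simp only [discharge, sum_sub_distrib, sum_add_distrib]
  rw [sum_comm (f := t), add_sub_cancel_right]

end Discharging

namespace SimpleGraph

variable {W : Type*} [Fintype W] (G : SimpleGraph W) [DecidableRel G.Adj]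

theorem card_adj_pairs_eq_sum_degree :
    ((univ ×ˢ univ).filter fun p : W × W => G.Adj p.1 p.2).card = ∑ v, G.degree v := by
  rw [card_filter, sum_product]
  simp only [degree, neighborFinset_eq_filter, card_filter]

def degreeThreeNeighbors (v : W) : Finset W :=
  (G.neighborFinset v).filter (G.degree · = 3)

def chargeTransfer (u v : W) : ℤ :=
  if G.Adj u v ∧ 4 ≤ G.degree u ∧ G.degree v = 3 then 1 else 0

theorem sum_chargeTransfer_out (v : W) :
    ∑ u, G.chargeTransfer v u = if 4 ≤ G.degree v then #(G.degreeThreeNeighbors v) else 0 := by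
  split_ifs with hv
  · rw [degreeThreeNeighbors, ← sum_boole]
    simp [chargeTransfer, hv, neighborFinset_eq_filter, filter_filter]
  · simp [chargeTransfer, hv]

theorem sum_chargeTransfer_in (v : W) :
    ∑ u, G.chargeTransfer u v =
      if G.degree v = 3 then #((G.neighborFinset v).filter (4 ≤ G.degree ·)) else 0 := by
  split_ifs with hv
  · rw [← sum_boole]
    simp [chargeTransfer, hv, adj_comm, neighborFinset_eq_filter, filter_filter]
  · simp [chargeTransfer, hv]

theorem degree_le_card_degree_ge_four_add_card_degreeThreeNeighbors
    (hmin : ∀ v, 2 < G.degree v) (v : W) :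
    G.degree v ≤
      #((G.neighborFinset v).filter (4 ≤ G.degree ·)) + #(G.degreeThreeNeighbors v) := by
  rw [← card_neighborFinset_eq_degree, ← card_filter_add_card_filter_not (4 ≤ G.degree ·)]
  gcongr
  intro u hu
  simp only [mem_filter, not_le] at hu
  exact mem_filter.2 ⟨hu.1, by have := hmin u; omega⟩

theorem card_degreeThreeNeighbors_le_degree (v : W) : #(G.degreeThreeNeighbors v) ≤ G.degree v :=
  (card_filter_le _ _).trans_eq (G.card_neighborFinset_eq_degree v)

theorem seventeen_le_discharge (hmin : ∀ v, 2 < G.degree v)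
    (h3 : ∀ v, G.degree v = 3 → #(G.degreeThreeNeighbors v) < 2)
    (h4 : ∀ v, G.degree v = 4 → #(G.degreeThreeNeighbors v) ≠ 4) (v : W) :
    17 ≤ discharge (fun v => 5 * (G.degree v : ℤ)) G.chargeTransfer v := by
  rw [discharge, sum_chargeTransfer_in, sum_chargeTransfer_out]
  have hle := G.card_degreeThreeNeighbors_le_degree v
  rcases lt_trichotomy (G.degree v) 4 with hv | hv | hv
  · have hv3 : G.degree v = 3 := by have := hmin v; omega
    have := G.degree_le_card_degree_ge_four_add_card_degreeThreeNeighbors hmin v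
    have := h3 v hv3
    rw [if_pos hv3, if_neg (by omega)]
    omega
  · have := h4 v hv
    rw [if_neg (by omega), if_pos hv.ge]
    omega
  · rw [if_neg (by omega), if_pos hv.le]
    omega

end SimpleGraph

theorem MadLT.sum_degree_lt {W : Type} [Fintype W] [Nonempty W] {G : SimpleGraph W}
    [DecidableRel G.Adj] {q : ℚ} (h : MadLT G q) :
    (∑ v, G.degree v : ℚ) < q * Fintype.card W := by
  have := h univ univ_nonempty
  rwa [G.card_adj_pairs_eq_sum_degree, Nat.cast_sum, card_univ] at this

/-- Every finite (nonempty) graph `G` with `mad(G) < 17/5` contains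
(i) a vertex of degree at most 2, or
(ii) a vertex of degree 3 with at least two neighbors of degree 3, or
(iii) a vertex of degree 4 with four neighbors of degree 3. -/
theorem exists_config_of_mad_lt_seventeen_fifths
    (G : SimpleGraph V) [DecidableRel G.Adj] [Nonempty V]
    (hmad : MadLT G (17/5)) :
    (∃ v, G.degree v ≤ 2) ∨
    (∃ v, G.degree v = 3 ∧
      2 ≤ ((G.neighborFinset v).filter fun w => G.degree w = 3).card) ∨
    (∃ v, G.degree v = 4 ∧
      ((G.neighborFinset v).filter fun w => G.degree w = 3).card = 4) := by
  by_contra! ⟨hmin, h3, h4⟩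
  have hcharge : 17 * (Fintype.card V : ℤ) ≤ 5 * ∑ v, (G.degree v : ℤ) :=
    calc 17 * (Fintype.card V : ℤ) = ∑ _v : V, 17 := by simp [mul_comm]
      _ ≤ ∑ v, discharge (fun v => 5 * (G.degree v : ℤ)) G.chargeTransfer v :=
        sum_le_sum fun v _ => G.seventeen_le_discharge hmin h3 h4 v
      _ = 5 * ∑ v, (G.degree v : ℤ) := by rw [sum_discharge, mul_sum]
  have hcharge' : (17 : ℚ) * Fintype.card V ≤ 5 * ∑ v, (G.degree v : ℚ) := by
    exact_mod_cast hcharge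
  linarith [hmad.sum_degree_lt]
end

section
/- Fix a graph G, a 6-assignment L for G, and L-colorings α and β of G. Suppose G has a vertex v of degree 3 with two neighbors w1 and w2 of degree 3 such that w1w2 is not an edge of G, and let G' := G − {v, w1, w2}. If G' has an L-recoloring sequence transforming the restriction of α to G' into the restriction of β to G' that recolors each vertex at most 12 times, then G has an L-recoloring sequence transforming α into β that recolors each vertex at most 12 times. -/
set_option maxHeartbeats 3200000
set_option linter.unusedSectionVars false
set_option linter.unnecessarySeqFocus false


variable {V : Type} [Fintype V] [DecidableEq V]

namespace Reducible

def AgreeOn (s : Set V) (f g : V → ℕ) : Prop := ∀ x ∈ s, f x = g x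

def Valid (G : SimpleGraph V) (L : V → Finset ℕ) (f : V → ℕ) (τ : List (V × ℕ)) : Prop :=
  ∀ k ≤ τ.length, ProperOn G L Set.univ (applySteps f (τ.take k))

def st (G : SimpleGraph V) [DecidableRel G.Adj] (y : V) (l : List (V × ℕ)) : List (V × ℕ) :=
  l.filter (fun q => decide (G.Adj y q.1))

def Sg (G : SimpleGraph V) [DecidableRel G.Adj] (y : V) (g : ℕ) (f : V → ℕ)
    (l : List (V × ℕ)) : Prop :=
  ∀ q ∈ (st G y l).take g, q.2 ≠ f y

theorem applySteps_cons (f : V → ℕ) (q : V × ℕ) (l : List (V × ℕ)) :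
    applySteps f (q :: l) = applySteps (Function.update f q.1 q.2) l := rfl

theorem applySteps_nil (f : V → ℕ) : applySteps f [] = f := rfl

theorem recolors_cons (q : V × ℕ) (l : List (V × ℕ)) (x : V) :
    recolors (q :: l) x = (if q.1 = x then 1 else 0) + recolors l x := by
  simp only [recolors, List.countP_cons]
  by_cases h : q.1 = x <;> simp [h] <;> omega

theorem recolors_nil (x : V) : recolors ([] : List (V × ℕ)) x = 0 := rfl

theorem valid_nil {G : SimpleGraph V} {L : V → Finset ℕ} {f : V → ℕ}
    (hf : ProperOn G L Set.univ f) : Valid G L f [] := by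
  intro k hk
  simp at hk
  simpa [hk, applySteps_nil] using hf

theorem valid_cons {G : SimpleGraph V} {L : V → Finset ℕ} {f : V → ℕ} {y : V} {p : ℕ}
    {τ : List (V × ℕ)} (hf : ProperOn G L Set.univ f)
    (h : Valid G L (Function.update f y p) τ) : Valid G L f ((y, p) :: τ) := by
  intro k hk
  cases k with
  | zero => simpa [applySteps_nil] using hf
  | succ k =>
    simp only [List.take_succ_cons, applySteps_cons]
    exact h k (by simpa using hk)

theorem agreeOn_update {s : Set V} {f g : V → ℕ} (h : AgreeOn s f g) (x : V) (c : ℕ) :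
    AgreeOn s (Function.update f x c) (Function.update g x c) := by
  intro z hz
  by_cases hzx : z = x <;> simp [Function.update, hzx, h z hz]

theorem agreeOn_update_notmem {s : Set V} {f : V → ℕ} {z : V} (hz : z ∉ s) (p : ℕ) :
    AgreeOn s f (Function.update f z p) := by
  intro x hx
  have : x ≠ z := fun h => hz (h ▸ hx)
  simp [Function.update, this]

theorem agreeOn_applySteps {s : Set V} {f g : V → ℕ} (h : AgreeOn s f g)
    (l : List (V × ℕ)) : AgreeOn s (applySteps f l) (applySteps g l) := by
  induction l generalizing f g with
  | nil => exact h
  | cons q l ih => exact ih (agreeOn_update h q.1 q.2)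

theorem properOn_congr {G : SimpleGraph V} {L : V → Finset ℕ} {s : Set V} {f g : V → ℕ}
    (h : AgreeOn s f g) (hf : ProperOn G L s f) : ProperOn G L s g := by
  constructor
  · intro x hx; rw [← h x hx]; exact hf.1 x hx
  · intro a ha b hb hadj; rw [← h a ha, ← h b hb]; exact hf.2 a ha b hb hadj

theorem applySteps_notmem {f : V → ℕ} {l : List (V × ℕ)} {x : V}
    (h : ∀ q ∈ l, q.1 ≠ x) : applySteps f l x = f x := by
  induction l generalizing f with
  | nil => rfl
  | cons q l ih =>
    rw [applySteps_cons, ih (fun q hq => h q (List.mem_cons_of_mem _ hq))]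
    exact Function.update_of_ne (Ne.symm (h q (List.mem_cons_self))) _ _

theorem proper_update_univ {G : SimpleGraph V} {L : V → Finset ℕ} {f : V → ℕ} {y : V} {p : ℕ}
    (hf : ProperOn G L Set.univ f) (hp : p ∈ L y) (hnb : ∀ z, G.Adj y z → f z ≠ p) :
    ProperOn G L Set.univ (Function.update f y p) := by
  constructor
  · intro x _
    by_cases hxy : x = y
    · subst hxy; simpa using hp
    · simpa [Function.update, hxy] using hf.1 x trivial
  · intro a _ b _ hadj
    by_cases hay : a = y
    · subst hay
      have hby : b ≠ a := fun h => (G.irrefl (h ▸ hadj))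
      simp only [Function.update_self, Function.update_of_ne hby]
      exact fun h => hnb b hadj h.symm
    · by_cases hby : b = y
      · subst hby
        simp only [Function.update_self, Function.update_of_ne hay]
        exact hnb a hadj.symm
      · simp only [Function.update_of_ne hay, Function.update_of_ne hby]
        exact hf.2 a trivial b trivial hadj

theorem exists_pick {Ly : Finset ℕ} (hL : Ly.card = 6) {B : Finset ℕ} (hB : B.card ≤ 5) :
    ∃ p ∈ Ly, p ∉ B := by
  by_contra h
  push_neg at h
  have : Ly ⊆ B := h
  have := Finset.card_le_card this
  omega

theorem exists_pick2 {Ly : Finset ℕ} (hL : Ly.card = 6) {B : Finset ℕ} (hB : B.card ≤ 5)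
    {d : ℕ} (hd : d ∉ (if (Ly \ B).card ≤ 1 then Ly \ B else (∅ : Finset ℕ))) :
    ∃ p ∈ Ly, p ∉ B ∧ p ≠ d := by
  by_cases hc : (Ly \ B).card ≤ 1
  · rw [if_pos hc] at hd
    have hne : (Ly \ B).Nonempty := by
      rw [← Finset.card_pos]
      have := Finset.card_le_card (Finset.sdiff_subset (s := Ly) (t := B))
      have h2 := Finset.le_card_sdiff B Ly
      omega
    obtain ⟨p, hp⟩ := hne
    have hpL := Finset.mem_sdiff.1 hp
    exact ⟨p, hpL.1, hpL.2, fun h => hd (h ▸ hp)⟩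
  · push_neg at hc
    have : ((Ly \ B) \ {d}).Nonempty := by
      rw [← Finset.card_pos]
      have := Finset.card_le_card (Finset.sdiff_subset (s := Ly \ B) (t := {d}))
      have h2 := Finset.le_card_sdiff {d} (Ly \ B)
      simp only [Finset.card_singleton] at h2
      omega
    obtain ⟨p, hp⟩ := this
    simp only [Finset.mem_sdiff, Finset.mem_singleton] at hp
    exact ⟨p, hp.1.1, hp.1.2, hp.2⟩

theorem st_cons (G : SimpleGraph V) [DecidableRel G.Adj] (y : V) (q : V × ℕ)
    (l : List (V × ℕ)) :
    st G y (q :: l) = if G.Adj y q.1 then q :: st G y l else st G y l := by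
  simp only [st, List.filter_cons]
  by_cases h : G.Adj y q.1 <;> simp [h]

theorem length_filter_le_sum (l : List (V × ℕ)) (t : Finset V) (p : V × ℕ → Bool)
    (h : ∀ q ∈ l, p q → q.1 ∈ t) :
    (l.filter p).length ≤ ∑ x ∈ t, l.countP (fun q => decide (q.1 = x)) := by
  induction l with
  | nil => simp
  | cons q l ih =>
    have hrest := ih (fun q' hq' => h q' (List.mem_cons_of_mem _ hq'))
    have hsum : ∑ x ∈ t, (q :: l).countP (fun r => decide (r.1 = x)) =
        (∑ x ∈ t, l.countP (fun r => decide (r.1 = x))) + (if q.1 ∈ t then 1 else 0) := by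
      have : ∀ x ∈ t, (q :: l).countP (fun r => decide (r.1 = x)) =
          l.countP (fun r => decide (r.1 = x)) + (if x = q.1 then 1 else 0) := by
        intro x _
        rw [List.countP_cons]
        by_cases hx : q.1 = x
        · simp [hx]
        · have hx' : ¬ x = q.1 := fun h => hx h.symm
          simp [hx, hx']
      rw [Finset.sum_congr rfl this, Finset.sum_add_distrib, Finset.sum_ite_eq' t q.1 (fun _ => 1)]
    rw [List.filter_cons, hsum]
    by_cases hq : p q
    · have hmem : q.1 ∈ t := h q (List.mem_cons_self) hq
      simp only [hq, if_true, List.length_cons, hmem]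
      omega
    · simp only [hq, Bool.false_eq_true, if_false]
      omega

theorem applySteps_append (f : V → ℕ) (l₁ l₂ : List (V × ℕ)) :
    applySteps f (l₁ ++ l₂) = applySteps (applySteps f l₁) l₂ := by
  induction l₁ generalizing f with
  | nil => rfl
  | cons q l ih => simp only [List.cons_append, applySteps_cons, ih]

theorem recolors_append (l₁ l₂ : List (V × ℕ)) (x : V) :
    recolors (l₁ ++ l₂) x = recolors l₁ x + recolors l₂ x := by
  simp [recolors, List.countP_append]

theorem valid_append {G : SimpleGraph V} {L : V → Finset ℕ} {f : V → ℕ}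
    {l₁ l₂ : List (V × ℕ)} (h₁ : Valid G L f l₁)
    (h₂ : Valid G L (applySteps f l₁) l₂) : Valid G L f (l₁ ++ l₂) := by
  induction l₁ generalizing f with
  | nil => exact h₂
  | cons q l ih =>
    refine valid_cons (h₁ 0 (by simp)) (ih ?_ h₂)
    intro k hk
    exact h₁ (k + 1) (by simpa using Nat.succ_le_succ hk)

theorem sg_zero {G : SimpleGraph V} [DecidableRel G.Adj] (y : V) (f : V → ℕ)
    (l : List (V × ℕ)) : Sg G y 0 f l := by
  intro q hq
  simp [List.take_zero] at hq

theorem sg_mono {G : SimpleGraph V} [DecidableRel G.Adj] {y : V} {g g' : ℕ} {f : V → ℕ}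
    {l : List (V × ℕ)} (hgg : g' ≤ g) (h : Sg G y g f l) : Sg G y g' f l := by
  intro q hq
  refine h q ?_
  have : (st G y l).take g' = ((st G y l).take g).take g' := by
    rw [List.take_take, min_eq_left hgg]
  rw [this] at hq
  exact List.take_subset _ _ hq

theorem sg_tail_adj {G : SimpleGraph V} [DecidableRel G.Adj] {y x : V} {c : ℕ} {g : ℕ}
    {f : V → ℕ} {l : List (V × ℕ)} (h : Sg G y g f ((x, c) :: l)) (hadj : G.Adj y x) :
    Sg G y (g - 1) f l := by
  intro q hq
  refine h q ?_
  rw [st_cons, if_pos hadj]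
  cases g with
  | zero => simp at hq
  | succ g => exact List.mem_cons_of_mem _ (by simpa using hq)

theorem sg_tail_nadj {G : SimpleGraph V} [DecidableRel G.Adj] {y x : V} {c : ℕ} {g : ℕ}
    {f : V → ℕ} {l : List (V × ℕ)} (h : Sg G y g f ((x, c) :: l)) (hadj : ¬ G.Adj y x) :
    Sg G y g f l := by
  intro q hq
  refine h q ?_
  rwa [st_cons, if_neg hadj]

theorem sg_head {G : SimpleGraph V} [DecidableRel G.Adj] {y x : V} {c : ℕ} {g : ℕ}
    {f : V → ℕ} {l : List (V × ℕ)} (h : Sg G y g f ((x, c) :: l)) (hadj : G.Adj y x)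
    (hg : 1 ≤ g) : c ≠ f y := by
  have : (x, c) ∈ (st G y ((x, c) :: l)).take g := by
    rw [st_cons, if_pos hadj]
    cases g with
    | zero => omega
    | succ g => simp
  exact h _ this

theorem sg_update_ne {G : SimpleGraph V} [DecidableRel G.Adj] {y z : V} {p : ℕ} {g : ℕ}
    {f : V → ℕ} {l : List (V × ℕ)} (hzy : z ≠ y) (h : Sg G y g f l) :
    Sg G y g (Function.update f z p) l := by
  intro q hq
  rw [Function.update_of_ne (Ne.symm hzy)]
  exact h q hq

theorem sg_congr {G : SimpleGraph V} [DecidableRel G.Adj] {y : V} {g : ℕ}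
    {f f' : V → ℕ} (hff : f y = f' y) (h : Sg G y g f l) : Sg G y g f' l := by
  intro q hq
  rw [← hff]
  exact h q hq

theorem st_length_cons_adj {G : SimpleGraph V} [DecidableRel G.Adj] {y x : V} {c : ℕ}
    {l : List (V × ℕ)} (hadj : G.Adj y x) :
    (st G y ((x, c) :: l)).length = (st G y l).length + 1 := by
  rw [st_cons, if_pos hadj, List.length_cons]

theorem st_length_cons_nadj {G : SimpleGraph V} [DecidableRel G.Adj] {y x : V} {c : ℕ}
    {l : List (V × ℕ)} (hadj : ¬ G.Adj y x) :
    (st G y ((x, c) :: l)).length = (st G y l).length := by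
  rw [st_cons, if_neg hadj]

theorem agreeOn_symm {s : Set V} {f g : V → ℕ} (h : AgreeOn s f g) : AgreeOn s g f :=
  fun x hx => (h x hx).symm

theorem hs_step {G : SimpleGraph V} {L : V → Finset ℕ} {S : Set V} {f f' : V → ℕ} {x : V}
    {c : ℕ} {rest : List (V × ℕ)} (hagree : AgreeOn S f f')
    (hs : ∀ k ≤ ((x, c) :: rest).length, ProperOn G L S (applySteps f (((x, c) :: rest).take k))) :
    ∀ k ≤ rest.length, ProperOn G L S (applySteps (Function.update f' x c) (rest.take k)) := by
  intro k hk
  have h := hs (k + 1) (by simpa using Nat.succ_le_succ hk)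
  rw [List.take_succ_cons, applySteps_cons] at h
  exact properOn_congr (agreeOn_applySteps (agreeOn_update hagree x c) _) h

theorem hbeta_step {S : Set V} {f f' β : V → ℕ} {x : V} {c : ℕ} {rest : List (V × ℕ)}
    (hagree : AgreeOn S f f')
    (hb : ∀ z ∈ S, applySteps f ((x, c) :: rest) z = β z) :
    ∀ z ∈ S, applySteps (Function.update f' x c) rest z = β z := by
  intro z hz
  rw [← hb z hz, applySteps_cons]
  exact agreeOn_applySteps (agreeOn_update (agreeOn_symm hagree) x c) rest z hz

theorem sg_tail' {G : SimpleGraph V} [DecidableRel G.Adj] {y x : V} {c : ℕ} {g : ℕ}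
    {f : V → ℕ} {l : List (V × ℕ)} (h : Sg G y g f ((x, c) :: l)) :
    Sg G y (g - if G.Adj y x then 1 else 0) f l := by
  by_cases hadj : G.Adj y x
  · rw [if_pos hadj]; exact sg_tail_adj h hadj
  · rw [if_neg hadj]; simpa using sg_tail_nadj h hadj

theorem st_length_cons' (G : SimpleGraph V) [DecidableRel G.Adj] (y x : V) (c : ℕ)
    (l : List (V × ℕ)) :
    (st G y ((x, c) :: l)).length = (st G y l).length + (if G.Adj y x then 1 else 0) := by
  by_cases hadj : G.Adj y x
  · rw [if_pos hadj, st_length_cons_adj hadj]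
  · rw [if_neg hadj, st_length_cons_nadj hadj]; ring


theorem cols_card (l : List (V × ℕ)) (k : ℕ) :
    ((l.take k).map Prod.snd).toFinset.card ≤ k := by
  refine le_trans (List.toFinset_card_le _) ?_
  simp [List.length_take]

theorem mem_cols {l : List (V × ℕ)} {k : ℕ} {q : V × ℕ} (hq : q ∈ l.take k) :
    q.2 ∈ ((l.take k).map Prod.snd).toFinset :=
  List.mem_toFinset.2 (List.mem_map_of_mem (f := Prod.snd) hq)

theorem card_union3 (A B C : Finset ℕ) : (A ∪ B ∪ C).card ≤ A.card + B.card + C.card := by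
  have h1 := Finset.card_union_le (A ∪ B) C
  have h2 := Finset.card_union_le A B
  omega

theorem card_union4 (A B C D : Finset ℕ) :
    (A ∪ B ∪ C ∪ D).card ≤ A.card + B.card + C.card + D.card := by
  have h1 := Finset.card_union_le (A ∪ B ∪ C) D
  have h2 := card_union3 A B C
  omega

theorem card_union5 (A B C D E : Finset ℕ) :
    (A ∪ B ∪ C ∪ D ∪ E).card ≤ A.card + B.card + C.card + D.card + E.card := by
  have h1 := Finset.card_union_le (A ∪ B ∪ C ∪ D) E
  have h2 := card_union4 A B C D
  omega

theorem sif_card (Ly B : Finset ℕ) :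
    (if (Ly \ B).card ≤ 1 then Ly \ B else (∅ : Finset ℕ)).card ≤ 1 := by
  split_ifs with h
  · exact h
  · simp

theorem adj_w_mem_erase {G : SimpleGraph V} [DecidableRel G.Adj] {w₁ v z : V}
    (hz : G.Adj w₁ z) (hzv : z ≠ v) : z ∈ (G.neighborFinset w₁).erase v :=
  Finset.mem_erase.2 ⟨hzv, (SimpleGraph.mem_neighborFinset G w₁ z).2 hz⟩


theorem main (G : SimpleGraph V) [DecidableRel G.Adj] (L : V → Finset ℕ)
    (hL : ∀ y, (L y).card = 6) (β : V → ℕ) (hβ : ProperOn G L Set.univ β)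
    (v w₁ w₂ : V)
    (hvw1 : G.Adj v w₁) (hvw2 : G.Adj v w₂) (hw : w₁ ≠ w₂) (hnadj : ¬ G.Adj w₁ w₂)
    (hNv1 : (((G.neighborFinset v).erase w₁).erase w₂).card = 1)
    (hNv3 : (G.neighborFinset v).card = 3)
    (hNw1e : ((G.neighborFinset w₁).erase v).card = 2)
    (hNw13 : (G.neighborFinset w₁).card = 3)
    (hNw2e : ((G.neighborFinset w₂).erase v).card = 2)
    (hNw23 : (G.neighborFinset w₂).card = 3) :
    ∀ (σrem : List (V × ℕ)) (f : V → ℕ) (DL1 DL2 g1 g2 gv : ℕ),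
      gv ≤ 1 →
      ProperOn G L Set.univ f →
      (∀ q ∈ σrem, q.1 ∈ {u : V | u ≠ v ∧ u ≠ w₁ ∧ u ≠ w₂}) →
      (∀ k ≤ σrem.length,
        ProperOn G L {u : V | u ≠ v ∧ u ≠ w₁ ∧ u ≠ w₂} (applySteps f (σrem.take k))) →
      (∀ z ∈ {u : V | u ≠ v ∧ u ≠ w₁ ∧ u ≠ w₂}, applySteps f σrem z = β z) →
      Sg G w₁ g1 f σrem → Sg G w₂ g2 f σrem → Sg G v gv f σrem →
      ∃ τ : List (V × ℕ),
        Valid G L f τ ∧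
        applySteps f τ = β ∧
        (∀ z ∈ {u : V | u ≠ v ∧ u ≠ w₁ ∧ u ≠ w₂}, recolors τ z = recolors σrem z) ∧
        2 * recolors τ w₁ ≤ max (2 * DL1) ((st G w₁ σrem).length + 1 - g1 - DL1) + 2 ∧
        2 * recolors τ w₂ ≤ max (2 * DL2) ((st G w₂ σrem).length + 1 - g2 - DL2) + 2 ∧
        2 * recolors τ v ≤ ((st G v σrem).length + 1 - gv) + 2 * (DL1 + DL2) + 4 := by
  have hvw1' : G.Adj w₁ v := hvw1.symm
  have hvw2' : G.Adj w₂ v := hvw2.symm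
  have hfvw1 : ∀ h : V → ℕ, ProperOn G L Set.univ h → h v ≠ h w₁ :=
    fun h hh => hh.2 v trivial w₁ trivial hvw1
  intro σrem
  induction σrem with
  | nil =>
    intro f DL1 DL2 g1 g2 gv hgv hf hmem hs hbeta hSg1 hSg2 hSgv
    have hfβ : ∀ z, z ≠ v → z ≠ w₁ → z ≠ w₂ → f z = β z := by
      intro z h1 h2 h3; exact hbeta z ⟨h1, h2, h3⟩
    -- pick a parking color t for v
    have hBt : ((G.neighborFinset v).image f ∪ {β w₁} ∪ {β w₂}).card ≤ 5 := by
      have h1 := Finset.card_union_le ((G.neighborFinset v).image f ∪ {β w₁}) ({β w₂} : Finset ℕ)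
      have h2 := Finset.card_union_le ((G.neighborFinset v).image f) ({β w₁} : Finset ℕ)
      have h3 := Finset.card_image_le (s := G.neighborFinset v) (f := f)
      simp only [Finset.card_singleton] at h1 h2
      omega
    obtain ⟨t, htL, htB⟩ := exists_pick (hL v) hBt
    simp only [Finset.mem_union, Finset.mem_image, Finset.mem_singleton, not_or] at htB
    obtain ⟨⟨htnb, htw1⟩, htw2⟩ := htB
    have htnb' : ∀ z, G.Adj v z → f z ≠ t := by
      intro z hz hzc
      exact htnb ⟨z, (SimpleGraph.mem_neighborFinset G v z).2 hz, hzc⟩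
    have hp1 : ProperOn G L Set.univ (Function.update f v t) :=
      proper_update_univ hf htL htnb'
    have h2nb : ∀ z, G.Adj w₁ z → Function.update f v t z ≠ β w₁ := by
      intro z hz
      by_cases hzv : z = v
      · subst hzv; rw [Function.update_self]; exact htw1
      · rw [Function.update_of_ne hzv]
        have hzw1 : z ≠ w₁ := (G.ne_of_adj hz).symm
        have hzw2 : z ≠ w₂ := by
          intro h; subst h; exact hnadj hz
        rw [hfβ z hzv hzw1 hzw2]
        exact fun h => (hβ.2 w₁ trivial z trivial hz) h.symm
    have hp2 : ProperOn G L Set.univ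
        (Function.update (Function.update f v t) w₁ (β w₁)) :=
      proper_update_univ hp1 (hβ.1 w₁ trivial) h2nb
    have h3nb : ∀ z, G.Adj w₂ z →
        Function.update (Function.update f v t) w₁ (β w₁) z ≠ β w₂ := by
      intro z hz
      have hzw1 : z ≠ w₁ := by
        intro h; subst h; exact hnadj hz.symm
      rw [Function.update_of_ne hzw1]
      by_cases hzv : z = v
      · subst hzv; rw [Function.update_self]; exact htw2
      · rw [Function.update_of_ne hzv]
        have hzw2 : z ≠ w₂ := (G.ne_of_adj hz).symm
        rw [hfβ z hzv hzw1 hzw2]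
        exact fun h => (hβ.2 w₂ trivial z trivial hz) h.symm
    have hp3 : ProperOn G L Set.univ
        (Function.update (Function.update (Function.update f v t) w₁ (β w₁)) w₂ (β w₂)) :=
      proper_update_univ hp2 (hβ.1 w₂ trivial) h3nb
    have h4nb : ∀ z, G.Adj v z →
        Function.update (Function.update (Function.update f v t) w₁ (β w₁)) w₂ (β w₂) z
          ≠ β v := by
      intro z hz
      by_cases hzw2 : z = w₂
      · rw [hzw2, Function.update_self]
        exact fun h => (hβ.2 v trivial w₂ trivial hvw2) h.symm
      · rw [Function.update_of_ne hzw2]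
        by_cases hzw1 : z = w₁
        · rw [hzw1, Function.update_self]
          exact fun h => (hβ.2 v trivial w₁ trivial hvw1) h.symm
        · rw [Function.update_of_ne hzw1]
          have hzv : z ≠ v := (G.ne_of_adj hz).symm
          rw [Function.update_of_ne hzv, hfβ z hzv hzw1 hzw2]
          exact fun h => (hβ.2 v trivial z trivial hz) h.symm
    have hp4 : ProperOn G L Set.univ (Function.update (Function.update (Function.update
        (Function.update f v t) w₁ (β w₁)) w₂ (β w₂)) v (β v)) :=
      proper_update_univ hp3 (hβ.1 v trivial) h4nb
    refine ⟨[(v, t), (w₁, β w₁), (w₂, β w₂), (v, β v)],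
      valid_cons hf (valid_cons hp1 (valid_cons hp2 (valid_cons hp3 (valid_nil hp4)))),
      ?_, ?_, ?_, ?_, ?_⟩
    · funext z
      show Function.update (Function.update (Function.update
        (Function.update f v t) w₁ (β w₁)) w₂ (β w₂)) v (β v) z = β z
      by_cases hzv : z = v
      · subst hzv; rw [Function.update_self]
      · rw [Function.update_of_ne hzv]
        by_cases hzw2 : z = w₂
        · subst hzw2; rw [Function.update_self]
        · rw [Function.update_of_ne hzw2]
          by_cases hzw1 : z = w₁
          · subst hzw1; rw [Function.update_self]
          · rw [Function.update_of_ne hzw1, Function.update_of_ne hzv]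
            exact hfβ z hzv hzw1 hzw2
    · intro z hz
      obtain ⟨h1, h2, h3⟩ := hz
      simp [recolors_cons, recolors_nil, Ne.symm h1, Ne.symm h2, Ne.symm h3]
    · have hvne1 : v ≠ w₁ := G.ne_of_adj hvw1
      have h1 : recolors [(v, t), (w₁, β w₁), (w₂, β w₂), (v, β v)] w₁ = 1 := by
        simp [recolors_cons, recolors_nil, hvne1, Ne.symm hw]
      rw [h1]
      exact Nat.le_add_left 2 _
    · have hvne2 : v ≠ w₂ := G.ne_of_adj hvw2
      have h1 : recolors [(v, t), (w₁, β w₁), (w₂, β w₂), (v, β v)] w₂ = 1 := by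
        simp [recolors_cons, recolors_nil, hvne2, hw]
      rw [h1]
      exact Nat.le_add_left 2 _
    · have hvne1 : v ≠ w₁ := G.ne_of_adj hvw1
      have hvne2 : v ≠ w₂ := G.ne_of_adj hvw2
      have h1 : recolors [(v, t), (w₁, β w₁), (w₂, β w₂), (v, β v)] v = 2 := by
        simp [recolors_cons, recolors_nil, Ne.symm hvne1, Ne.symm hvne2]
      rw [h1]
      exact Nat.le_add_left 4 _
  | cons q rest ih =>
    obtain ⟨x, c⟩ := q
    intro f DL1 DL2 g1 g2 gv hgv hf hmem hs hbeta hSg1 hSg2 hSgv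
    have hxs : x ∈ {u : V | u ≠ v ∧ u ≠ w₁ ∧ u ≠ w₂} := hmem (x, c) (List.mem_cons_self)
    obtain ⟨hxv, hxw1, hxw2⟩ := hxs
    have hstep1 : ProperOn G L {u : V | u ≠ v ∧ u ≠ w₁ ∧ u ≠ w₂} (Function.update f x c) := by
      have h1 := hs 1 (by simp)
      simpa [applySteps_cons, applySteps_nil] using h1
    have hcL : c ∈ L x := by
      have := hstep1.1 x ⟨hxv, hxw1, hxw2⟩
      simpa using this
    have hcs : ∀ z, G.Adj x z → z ≠ v → z ≠ w₁ → z ≠ w₂ → f z ≠ c := by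
      intro z hadj hzv hzw1 hzw2
      have hxz : x ≠ z := G.ne_of_adj hadj
      have h2 := hstep1.2 x ⟨hxv, hxw1, hxw2⟩ z ⟨hzv, hzw1, hzw2⟩ hadj
      rw [Function.update_self, Function.update_of_ne (Ne.symm hxz)] at h2
      exact fun h => h2 h.symm
    have hmem' : ∀ q ∈ rest, q.1 ∈ {u : V | u ≠ v ∧ u ≠ w₁ ∧ u ≠ w₂} :=
      fun q hq => hmem q (List.mem_cons_of_mem _ hq)
    by_cases d1 : G.Adj w₁ x ∧ c = f w₁
    · obtain ⟨hadj1, hc1⟩ := d1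
      have hvne1 : v ≠ w₁ := G.ne_of_adj hvw1
      have hvne2 : v ≠ w₂ := G.ne_of_adj hvw2
      have hg10 : g1 = 0 := by
        by_contra h
        exact (sg_head hSg1 hadj1 (by omega)) hc1
      have hfvc : f v ≠ c := fun h => hfvw1 f hf (h.trans hc1)
      by_cases d2 : G.Adj w₂ x ∧ c = f w₂
      · -- collision: both w₁ and w₂ triggered
        obtain ⟨hadj2, hc2⟩ := d2
        have hg20 : g2 = 0 := by
          by_contra h
          exact (sg_head hSg2 hadj2 (by omega)) hc2
        by_cases hD : 0 < DL1 ∨ 0 < DL2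
        · -- dodge serving both
          have hDsum : 1 ≤ DL1 + DL2 := by rcases hD with h | h <;> omega
          set n12 : Finset ℕ := (((st G w₁ rest).take 2).map Prod.snd).toFinset with hn12
          set B₁ : Finset ℕ := ((G.neighborFinset w₁).erase v).image f ∪ {c} ∪ n12 with hB₁
          have hB₁card : B₁.card ≤ 5 := by
            have h1 := card_union3 (((G.neighborFinset w₁).erase v).image f) {c} n12
            have h2 := Finset.card_image_le (s := (G.neighborFinset w₁).erase v) (f := f)
            have h3 := cols_card (st G w₁ rest) 2
            simp only [Finset.card_singleton] at h1
            rw [← hn12] at h3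
            rw [hB₁]
            omega
          set S₁ : Finset ℕ := if (L w₁ \ B₁).card ≤ 1 then L w₁ \ B₁ else ∅ with hS₁
          set n22 : Finset ℕ := (((st G w₂ rest).take 2).map Prod.snd).toFinset with hn22
          set B₂ : Finset ℕ := ((G.neighborFinset w₂).erase v).image f ∪ {c} ∪ n22 with hB₂
          have hB₂card : B₂.card ≤ 5 := by
            have h1 := card_union3 (((G.neighborFinset w₂).erase v).image f) {c} n22
            have h2 := Finset.card_image_le (s := (G.neighborFinset w₂).erase v) (f := f)
            have h3 := cols_card (st G w₂ rest) 2
            simp only [Finset.card_singleton] at h1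
            rw [← hn22] at h3
            rw [hB₂]
            omega
          set S₂ : Finset ℕ := if (L w₂ \ B₂).card ≤ 1 then L w₂ \ B₂ else ∅ with hS₂
          set nv1 : Finset ℕ := (((st G v ((x, c) :: rest)).take 1).map Prod.snd).toFinset
            with hnv1
          have hBdcard : ((((G.neighborFinset v).erase w₁).erase w₂).image f ∪ {c}
              ∪ S₁ ∪ S₂ ∪ nv1).card ≤ 5 := by
            have h1 := card_union5 ((((G.neighborFinset v).erase w₁).erase w₂).image f)
              {c} S₁ S₂ nv1
            have h2 := Finset.card_image_le
              (s := ((G.neighborFinset v).erase w₁).erase w₂) (f := f)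
            have h3 := cols_card (st G v ((x, c) :: rest)) 1
            have h4 := sif_card (L w₁) B₁
            have h5 := sif_card (L w₂) B₂
            rw [← hS₁] at h4
            rw [← hS₂] at h5
            simp only [Finset.card_singleton] at h1
            rw [← hnv1] at h3
            omega
          obtain ⟨d, hdL, hdB⟩ := exists_pick (hL v) hBdcard
          simp only [Finset.mem_union, Finset.mem_image, Finset.mem_singleton, not_or] at hdB
          obtain ⟨⟨⟨⟨hdrest, hdc⟩, hdS1⟩, hdS2⟩, hdnv⟩ := hdB
          have hdnb : ∀ z, G.Adj v z → f z ≠ d := by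
            intro z hz
            by_cases hzw1 : z = w₁
            · rw [hzw1, ← hc1]; exact fun h => hdc h.symm
            · by_cases hzw2 : z = w₂
              · rw [hzw2, ← hc2]; exact fun h => hdc h.symm
              · intro h
                exact hdrest ⟨z, Finset.mem_erase.2 ⟨hzw2, Finset.mem_erase.2
                  ⟨hzw1, (SimpleGraph.mem_neighborFinset G v z).2 hz⟩⟩, h⟩
          have hp1 : ProperOn G L Set.univ (Function.update f v d) :=
            proper_update_univ hf hdL hdnb
          obtain ⟨p₁, hp₁L, hp₁B, hp₁d⟩ :=
            exists_pick2 (hL w₁) hB₁card (by rw [← hS₁]; exact hdS1)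
          rw [hB₁] at hp₁B
          simp only [Finset.mem_union, Finset.mem_image, Finset.mem_singleton, not_or] at hp₁B
          obtain ⟨⟨hp₁img, hp₁c⟩, hp₁n12⟩ := hp₁B
          have hp₁nb : ∀ z, G.Adj w₁ z → Function.update f v d z ≠ p₁ := by
            intro z hz
            by_cases hzv : z = v
            · rw [hzv, Function.update_self]; exact Ne.symm hp₁d
            · rw [Function.update_of_ne hzv]
              exact fun h => hp₁img ⟨z, adj_w_mem_erase hz hzv, h⟩
          have hp2 : ProperOn G L Set.univ
              (Function.update (Function.update f v d) w₁ p₁) :=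
            proper_update_univ hp1 hp₁L hp₁nb
          obtain ⟨p₂, hp₂L, hp₂B, hp₂d⟩ :=
            exists_pick2 (hL w₂) hB₂card (by rw [← hS₂]; exact hdS2)
          rw [hB₂] at hp₂B
          simp only [Finset.mem_union, Finset.mem_image, Finset.mem_singleton, not_or] at hp₂B
          obtain ⟨⟨hp₂img, hp₂c⟩, hp₂n22⟩ := hp₂B
          have hp₂nb : ∀ z, G.Adj w₂ z →
              Function.update (Function.update f v d) w₁ p₁ z ≠ p₂ := by
            intro z hz
            have hzw1 : z ≠ w₁ := fun h => hnadj (h ▸ hz).symm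
            rw [Function.update_of_ne hzw1]
            by_cases hzv : z = v
            · rw [hzv, Function.update_self]; exact Ne.symm hp₂d
            · rw [Function.update_of_ne hzv]
              exact fun h => hp₂img ⟨z, adj_w_mem_erase hz hzv, h⟩
          have hp3 : ProperOn G L Set.univ (Function.update
              (Function.update (Function.update f v d) w₁ p₁) w₂ p₂) :=
            proper_update_univ hp2 hp₂L hp₂nb
          have hnb4 : ∀ z, G.Adj x z → Function.update
              (Function.update (Function.update f v d) w₁ p₁) w₂ p₂ z ≠ c := by
            intro z hz
            by_cases hzw2 : z = w₂
            · rw [hzw2, Function.update_self]; exact hp₂c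
            · rw [Function.update_of_ne hzw2]
              by_cases hzw1 : z = w₁
              · rw [hzw1, Function.update_self]; exact hp₁c
              · rw [Function.update_of_ne hzw1]
                by_cases hzv : z = v
                · rw [hzv, Function.update_self]; exact hdc
                · rw [Function.update_of_ne hzv]
                  exact hcs z hz hzv hzw1 hzw2
          have hp4 : ProperOn G L Set.univ (Function.update (Function.update
              (Function.update (Function.update f v d) w₁ p₁) w₂ p₂) x c) :=
            proper_update_univ hp3 hcL hnb4
          have hagree : AgreeOn {u : V | u ≠ v ∧ u ≠ w₁ ∧ u ≠ w₂} f
              (Function.update (Function.update (Function.update f v d) w₁ p₁) w₂ p₂) := by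
            intro z hz
            rw [Function.update_of_ne hz.2.2, Function.update_of_ne hz.2.1,
              Function.update_of_ne hz.1]
          have hSg1' : Sg G w₁ 2 (Function.update (Function.update
              (Function.update (Function.update f v d) w₁ p₁) w₂ p₂) x c) rest := by
            intro q hq
            rw [Function.update_of_ne (Ne.symm hxw1), Function.update_of_ne hw,
              Function.update_self]
            exact fun h => hp₁n12 (by rw [hn12]; exact h ▸ mem_cols hq)
          have hSg2' : Sg G w₂ 2 (Function.update (Function.update
              (Function.update (Function.update f v d) w₁ p₁) w₂ p₂) x c) rest := by
            intro q hq
            rw [Function.update_of_ne (Ne.symm hxw2), Function.update_self]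
            exact fun h => hp₂n22 (by rw [hn22]; exact h ▸ mem_cols hq)
          have hSgv' : Sg G v (if G.Adj v x then 0 else 1) (Function.update (Function.update
              (Function.update (Function.update f v d) w₁ p₁) w₂ p₂) x c) rest := by
            by_cases hvx : G.Adj v x
            · rw [if_pos hvx]; exact sg_zero v _ rest
            · rw [if_neg hvx]
              intro q hq
              rw [Function.update_of_ne (Ne.symm hxv), Function.update_of_ne hvne2,
                Function.update_of_ne hvne1, Function.update_self]
              refine fun h => hdnv ?_
              rw [hnv1, st_cons, if_neg hvx]
              exact h ▸ mem_cols hq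
          obtain ⟨τ', hv', hb', hc', h1', h2', hv2'⟩ :=
            ih (Function.update (Function.update
              (Function.update (Function.update f v d) w₁ p₁) w₂ p₂) x c)
              (DL1 - 1) (DL2 - 1) 2 2 _ (by split_ifs <;> omega) hp4 hmem'
              (hs_step hagree hs) (hbeta_step hagree hbeta) hSg1' hSg2' hSgv'
          refine ⟨(v, d) :: (w₁, p₁) :: (w₂, p₂) :: (x, c) :: τ',
            valid_cons hf (valid_cons hp1 (valid_cons hp2 (valid_cons hp3 hv'))),
            by rw [applySteps_cons, applySteps_cons, applySteps_cons, applySteps_cons]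
               exact hb', ?_, ?_, ?_, ?_⟩
          · intro z hz
            obtain ⟨h1, h2, h3⟩ := hz
            rw [recolors_cons, recolors_cons, recolors_cons, recolors_cons, recolors_cons,
              hc' z ⟨h1, h2, h3⟩, if_neg (Ne.symm h1), if_neg (Ne.symm h2),
              if_neg (Ne.symm h3)]
            simp only [Nat.zero_add]
          · rw [recolors_cons, recolors_cons, recolors_cons, recolors_cons, if_neg hvne1,
              if_pos rfl, if_neg (Ne.symm hw), if_neg hxw1, st_length_cons',
              if_pos hadj1, hg10]
            simp only [Nat.zero_add, Nat.max_def] at h1' ⊢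
            split_ifs at h1' ⊢ <;> omega
          · rw [recolors_cons, recolors_cons, recolors_cons, recolors_cons, if_neg hvne2,
              if_neg hw, if_pos rfl, if_neg hxw2, st_length_cons',
              if_pos hadj2, hg20]
            simp only [Nat.zero_add, Nat.max_def] at h2' ⊢
            split_ifs at h2' ⊢ <;> omega
          · rw [recolors_cons, recolors_cons, recolors_cons, recolors_cons, if_pos rfl,
              if_neg (Ne.symm hvne1), if_neg (Ne.symm hvne2), if_neg hxv, st_length_cons']
            simp only [Nat.zero_add] at hv2' ⊢
            split_ifs at hv2' ⊢ <;> omega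
        · -- both tight
          push_neg at hD
          have hDL10 : DL1 = 0 := by omega
          have hDL20 : DL2 = 0 := by omega
          set n11 : Finset ℕ := (((st G w₁ rest).take 1).map Prod.snd).toFinset with hn11
          have hBcard : ((G.neighborFinset w₁).image f ∪ {c} ∪ n11).card ≤ 5 := by
            have h1 := card_union3 ((G.neighborFinset w₁).image f) {c} n11
            have h2 := Finset.card_image_le (s := G.neighborFinset w₁) (f := f)
            have h3 := cols_card (st G w₁ rest) 1
            simp only [Finset.card_singleton] at h1
            rw [← hn11] at h3
            omega
          obtain ⟨p₁, hpL, hpB⟩ := exists_pick (hL w₁) hBcard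
          simp only [Finset.mem_union, Finset.mem_image, Finset.mem_singleton, not_or] at hpB
          obtain ⟨⟨hpnb, hpc⟩, hpn⟩ := hpB
          have hpnb' : ∀ z, G.Adj w₁ z → f z ≠ p₁ := fun z hz hzc =>
            hpnb ⟨z, (SimpleGraph.mem_neighborFinset G w₁ z).2 hz, hzc⟩
          have hp1 : ProperOn G L Set.univ (Function.update f w₁ p₁) :=
            proper_update_univ hf hpL hpnb'
          set n21 : Finset ℕ := (((st G w₂ rest).take 1).map Prod.snd).toFinset with hn21
          have hB2card : ((G.neighborFinset w₂).image (Function.update f w₁ p₁)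
              ∪ {c} ∪ n21).card ≤ 5 := by
            have h1 := card_union3 ((G.neighborFinset w₂).image (Function.update f w₁ p₁))
              {c} n21
            have h2 := Finset.card_image_le (s := G.neighborFinset w₂)
              (f := Function.update f w₁ p₁)
            have h3 := cols_card (st G w₂ rest) 1
            simp only [Finset.card_singleton] at h1
            rw [← hn21] at h3
            omega
          obtain ⟨p₂, hp₂L, hp₂B⟩ := exists_pick (hL w₂) hB2card
          simp only [Finset.mem_union, Finset.mem_image, Finset.mem_singleton, not_or] at hp₂B
          obtain ⟨⟨hp₂nb, hp₂c⟩, hp₂n⟩ := hp₂B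
          have hp₂nb' : ∀ z, G.Adj w₂ z → Function.update f w₁ p₁ z ≠ p₂ := fun z hz hzc =>
            hp₂nb ⟨z, (SimpleGraph.mem_neighborFinset G w₂ z).2 hz, hzc⟩
          have hp2 : ProperOn G L Set.univ
              (Function.update (Function.update f w₁ p₁) w₂ p₂) :=
            proper_update_univ hp1 hp₂L hp₂nb'
          have hnb3 : ∀ z, G.Adj x z →
              Function.update (Function.update f w₁ p₁) w₂ p₂ z ≠ c := by
            intro z hz
            by_cases hzw2 : z = w₂
            · rw [hzw2, Function.update_self]; exact hp₂c
            · rw [Function.update_of_ne hzw2]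
              by_cases hzw1 : z = w₁
              · rw [hzw1, Function.update_self]; exact hpc
              · rw [Function.update_of_ne hzw1]
                by_cases hzv : z = v
                · rw [hzv]; exact hfvc
                · exact hcs z hz hzv hzw1 hzw2
          have hp3 : ProperOn G L Set.univ (Function.update
              (Function.update (Function.update f w₁ p₁) w₂ p₂) x c) :=
            proper_update_univ hp2 hcL hnb3
          have hagree : AgreeOn {u : V | u ≠ v ∧ u ≠ w₁ ∧ u ≠ w₂} f
              (Function.update (Function.update f w₁ p₁) w₂ p₂) := by
            intro z hz
            rw [Function.update_of_ne hz.2.2, Function.update_of_ne hz.2.1]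
          have hSg1' : Sg G w₁ 1 (Function.update
              (Function.update (Function.update f w₁ p₁) w₂ p₂) x c) rest := by
            intro q hq
            rw [Function.update_of_ne (Ne.symm hxw1), Function.update_of_ne hw,
              Function.update_self]
            exact fun h => hpn (by rw [hn11]; exact h ▸ mem_cols hq)
          have hSg2' : Sg G w₂ 1 (Function.update
              (Function.update (Function.update f w₁ p₁) w₂ p₂) x c) rest := by
            intro q hq
            rw [Function.update_of_ne (Ne.symm hxw2), Function.update_self]
            exact fun h => hp₂n (by rw [hn21]; exact h ▸ mem_cols hq)
          have hSgv' : Sg G v (gv - if G.Adj v x then 1 else 0) (Function.update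
              (Function.update (Function.update f w₁ p₁) w₂ p₂) x c) rest := by
            refine sg_congr ?_ (sg_tail' hSgv)
            rw [Function.update_of_ne (Ne.symm hxv), Function.update_of_ne hvne2,
              Function.update_of_ne hvne1]
          obtain ⟨τ', hv', hb', hc', h1', h2', hv2'⟩ :=
            ih (Function.update (Function.update (Function.update f w₁ p₁) w₂ p₂) x c)
              DL1 DL2 1 1 _ (le_trans (Nat.sub_le _ _) hgv) hp3 hmem'
              (hs_step hagree hs) (hbeta_step hagree hbeta) hSg1' hSg2' hSgv'
          refine ⟨(w₁, p₁) :: (w₂, p₂) :: (x, c) :: τ',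
            valid_cons hf (valid_cons hp1 (valid_cons hp2 hv')),
            by rw [applySteps_cons, applySteps_cons, applySteps_cons]; exact hb',
            ?_, ?_, ?_, ?_⟩
          · intro z hz
            obtain ⟨h1, h2, h3⟩ := hz
            rw [recolors_cons, recolors_cons, recolors_cons, recolors_cons,
              hc' z ⟨h1, h2, h3⟩, if_neg (Ne.symm h2), if_neg (Ne.symm h3)]
            simp only [Nat.zero_add]
          · rw [recolors_cons, recolors_cons, recolors_cons, if_pos rfl,
              if_neg (Ne.symm hw), if_neg hxw1, st_length_cons', if_pos hadj1, hg10, hDL10]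
            simp only [Nat.zero_add, Nat.max_def] at h1' ⊢
            split_ifs at h1' ⊢ <;> omega
          · rw [recolors_cons, recolors_cons, recolors_cons, if_neg hw, if_pos rfl,
              if_neg hxw2, st_length_cons', if_pos hadj2, hg20, hDL20]
            simp only [Nat.zero_add, Nat.max_def] at h2' ⊢
            split_ifs at h2' ⊢ <;> omega
          · rw [recolors_cons, recolors_cons, recolors_cons, if_neg (Ne.symm hvne1),
              if_neg (Ne.symm hvne2), if_neg hxv, st_length_cons']
            simp only [Nat.zero_add] at hv2' ⊢
            split_ifs at hv2' ⊢ <;> omega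
      · by_cases hDL1 : 0 < DL1
        · -- dodge for w₁, loose switch
          set n12 : Finset ℕ := (((st G w₁ rest).take 2).map Prod.snd).toFinset with hn12
          set B₁ : Finset ℕ := ((G.neighborFinset w₁).erase v).image f ∪ {c} ∪ n12 with hB₁
          have hB₁card : B₁.card ≤ 5 := by
            have h1 := card_union3 (((G.neighborFinset w₁).erase v).image f) {c} n12
            have h2 := Finset.card_image_le (s := (G.neighborFinset w₁).erase v) (f := f)
            have h3 := cols_card (st G w₁ rest) 2
            simp only [Finset.card_singleton] at h1
            rw [← hn12] at h3
            rw [hB₁]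
            omega
          set S₁ : Finset ℕ := if (L w₁ \ B₁).card ≤ 1 then L w₁ \ B₁ else ∅ with hS₁
          set nv1 : Finset ℕ := (((st G v ((x, c) :: rest)).take 1).map Prod.snd).toFinset
            with hnv1
          have hBdcard : ((((G.neighborFinset v).erase w₁).erase w₂).image f ∪ {c} ∪ {f w₂}
              ∪ S₁ ∪ nv1).card ≤ 5 := by
            have h1 := card_union5 ((((G.neighborFinset v).erase w₁).erase w₂).image f)
              {c} {f w₂} S₁ nv1
            have h2 := Finset.card_image_le
              (s := ((G.neighborFinset v).erase w₁).erase w₂) (f := f)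
            have h3 := cols_card (st G v ((x, c) :: rest)) 1
            have h4 := sif_card (L w₁) B₁
            rw [← hS₁] at h4
            simp only [Finset.card_singleton] at h1
            rw [← hnv1] at h3
            omega
          obtain ⟨d, hdL, hdB⟩ := exists_pick (hL v) hBdcard
          simp only [Finset.mem_union, Finset.mem_image, Finset.mem_singleton, not_or] at hdB
          obtain ⟨⟨⟨⟨hdrest, hdc⟩, hdw2⟩, hdS1⟩, hdnv⟩ := hdB
          have hdnb : ∀ z, G.Adj v z → f z ≠ d := by
            intro z hz
            by_cases hzw1 : z = w₁
            · rw [hzw1, ← hc1]; exact fun h => hdc h.symm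
            · by_cases hzw2 : z = w₂
              · rw [hzw2]; exact fun h => hdw2 h.symm
              · intro h
                exact hdrest ⟨z, Finset.mem_erase.2 ⟨hzw2, Finset.mem_erase.2
                  ⟨hzw1, (SimpleGraph.mem_neighborFinset G v z).2 hz⟩⟩, h⟩
          have hp1 : ProperOn G L Set.univ (Function.update f v d) :=
            proper_update_univ hf hdL hdnb
          obtain ⟨p₁, hp₁L, hp₁B, hp₁d⟩ := exists_pick2 (hL w₁) hB₁card (by rw [← hS₁]; exact hdS1)
          rw [hB₁] at hp₁B
          simp only [Finset.mem_union, Finset.mem_image, Finset.mem_singleton, not_or] at hp₁B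
          obtain ⟨⟨hp₁img, hp₁c⟩, hp₁n12⟩ := hp₁B
          have hp₁nb : ∀ z, G.Adj w₁ z → Function.update f v d z ≠ p₁ := by
            intro z hz
            by_cases hzv : z = v
            · rw [hzv, Function.update_self]; exact Ne.symm hp₁d
            · rw [Function.update_of_ne hzv]
              exact fun h => hp₁img ⟨z, adj_w_mem_erase hz hzv, h⟩
          have hp2 : ProperOn G L Set.univ
              (Function.update (Function.update f v d) w₁ p₁) :=
            proper_update_univ hp1 hp₁L hp₁nb
          have hnb3 : ∀ z, G.Adj x z →
              Function.update (Function.update f v d) w₁ p₁ z ≠ c := by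
            intro z hz
            by_cases hzw1 : z = w₁
            · rw [hzw1, Function.update_self]; exact hp₁c
            · rw [Function.update_of_ne hzw1]
              by_cases hzv : z = v
              · rw [hzv, Function.update_self]; exact hdc
              · rw [Function.update_of_ne hzv]
                by_cases hzw2 : z = w₂
                · rw [hzw2]; exact fun h => d2 ⟨(hzw2 ▸ hz).symm, h.symm⟩
                · exact hcs z hz hzv hzw1 hzw2
          have hp3 : ProperOn G L Set.univ (Function.update
              (Function.update (Function.update f v d) w₁ p₁) x c) :=
            proper_update_univ hp2 hcL hnb3
          have hagree : AgreeOn {u : V | u ≠ v ∧ u ≠ w₁ ∧ u ≠ w₂} f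
              (Function.update (Function.update f v d) w₁ p₁) := by
            intro z hz
            rw [Function.update_of_ne hz.2.1, Function.update_of_ne hz.1]
          have hSg1' : Sg G w₁ 2 (Function.update
              (Function.update (Function.update f v d) w₁ p₁) x c) rest := by
            intro q hq
            rw [Function.update_of_ne (Ne.symm hxw1), Function.update_self]
            exact fun h => hp₁n12 (by rw [hn12]; exact h ▸ mem_cols hq)
          have hSg2' : Sg G w₂ (g2 - if G.Adj w₂ x then 1 else 0) (Function.update
              (Function.update (Function.update f v d) w₁ p₁) x c) rest := by
            refine sg_congr ?_ (sg_tail' hSg2)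
            rw [Function.update_of_ne (Ne.symm hxw2), Function.update_of_ne (Ne.symm hw),
              Function.update_of_ne (Ne.symm hvne2)]
          have hSgv' : Sg G v (if G.Adj v x then 0 else 1) (Function.update
              (Function.update (Function.update f v d) w₁ p₁) x c) rest := by
            by_cases hvx : G.Adj v x
            · rw [if_pos hvx]; exact sg_zero v _ rest
            · rw [if_neg hvx]
              intro q hq
              rw [Function.update_of_ne (Ne.symm hxv), Function.update_of_ne hvne1,
                Function.update_self]
              refine fun h => hdnv ?_
              rw [hnv1, st_cons, if_neg hvx]
              exact h ▸ mem_cols hq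
          obtain ⟨τ', hv', hb', hc', h1', h2', hv2'⟩ :=
            ih (Function.update (Function.update (Function.update f v d) w₁ p₁) x c)
              (DL1 - 1) DL2 2 _ _ (by split_ifs <;> omega) hp3 hmem'
              (hs_step hagree hs) (hbeta_step hagree hbeta) hSg1' hSg2' hSgv'
          refine ⟨(v, d) :: (w₁, p₁) :: (x, c) :: τ',
            valid_cons hf (valid_cons hp1 (valid_cons hp2 hv')),
            by rw [applySteps_cons, applySteps_cons, applySteps_cons]; exact hb', ?_, ?_, ?_, ?_⟩
          · intro z hz
            obtain ⟨h1, h2, h3⟩ := hz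
            rw [recolors_cons, recolors_cons, recolors_cons, recolors_cons,
              hc' z ⟨h1, h2, h3⟩, if_neg (Ne.symm h1), if_neg (Ne.symm h2), Nat.zero_add,
              Nat.zero_add]
          · rw [recolors_cons, recolors_cons, recolors_cons, if_neg hvne1, if_pos rfl,
              if_neg hxw1, st_length_cons', if_pos hadj1, hg10]
            simp only [Nat.zero_add, Nat.max_def] at h1' ⊢
            split_ifs at h1' ⊢ <;> omega
          · rw [recolors_cons, recolors_cons, recolors_cons, if_neg hvne2, if_neg hw,
              if_neg hxw2, st_length_cons']
            simp only [Nat.zero_add, Nat.max_def] at h2' ⊢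
            split_ifs at h2' ⊢ <;> omega
          · rw [recolors_cons, recolors_cons, recolors_cons, if_pos rfl,
              if_neg (Ne.symm hvne1), if_neg hxv, st_length_cons']
            simp only [Nat.zero_add] at hv2' ⊢
            split_ifs at hv2' ⊢ <;> omega
        · -- tight switch for w₁
          have hDL10 : DL1 = 0 := by omega
          set n11 : Finset ℕ := (((st G w₁ rest).take 1).map Prod.snd).toFinset with hn11
          have hBcard : ((G.neighborFinset w₁).image f ∪ {c} ∪ n11).card ≤ 5 := by
            have h1 := card_union3 ((G.neighborFinset w₁).image f) {c} n11
            have h2 := Finset.card_image_le (s := G.neighborFinset w₁) (f := f)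
            have h3 := cols_card (st G w₁ rest) 1
            simp only [Finset.card_singleton] at h1
            rw [← hn11] at h3
            omega
          obtain ⟨p₁, hpL, hpB⟩ := exists_pick (hL w₁) hBcard
          simp only [Finset.mem_union, Finset.mem_image, Finset.mem_singleton, not_or] at hpB
          obtain ⟨⟨hpnb, hpc⟩, hpn⟩ := hpB
          have hpnb' : ∀ z, G.Adj w₁ z → f z ≠ p₁ := fun z hz hzc =>
            hpnb ⟨z, (SimpleGraph.mem_neighborFinset G w₁ z).2 hz, hzc⟩
          have hp1 : ProperOn G L Set.univ (Function.update f w₁ p₁) :=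
            proper_update_univ hf hpL hpnb'
          have hnb2 : ∀ z, G.Adj x z → Function.update f w₁ p₁ z ≠ c := by
            intro z hz
            by_cases hzw1 : z = w₁
            · rw [hzw1, Function.update_self]; exact hpc
            · rw [Function.update_of_ne hzw1]
              by_cases hzv : z = v
              · rw [hzv]; exact hfvc
              · by_cases hzw2 : z = w₂
                · rw [hzw2]; exact fun h => d2 ⟨(hzw2 ▸ hz).symm, h.symm⟩
                · exact hcs z hz hzv hzw1 hzw2
          have hp2 : ProperOn G L Set.univ
              (Function.update (Function.update f w₁ p₁) x c) :=
            proper_update_univ hp1 hcL hnb2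
          have hagree : AgreeOn {u : V | u ≠ v ∧ u ≠ w₁ ∧ u ≠ w₂} f
              (Function.update f w₁ p₁) := agreeOn_update_notmem (by simp) p₁
          have hSg1' : Sg G w₁ 1 (Function.update (Function.update f w₁ p₁) x c) rest := by
            intro q hq
            rw [Function.update_of_ne (Ne.symm hxw1), Function.update_self]
            exact fun h => hpn (by rw [hn11]; exact h ▸ mem_cols hq)
          have hSg2' : Sg G w₂ (g2 - if G.Adj w₂ x then 1 else 0)
              (Function.update (Function.update f w₁ p₁) x c) rest := by
            refine sg_congr ?_ (sg_tail' hSg2)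
            rw [Function.update_of_ne (Ne.symm hxw2), Function.update_of_ne (Ne.symm hw)]
          have hSgv' : Sg G v (gv - if G.Adj v x then 1 else 0)
              (Function.update (Function.update f w₁ p₁) x c) rest := by
            refine sg_congr ?_ (sg_tail' hSgv)
            rw [Function.update_of_ne (Ne.symm hxv), Function.update_of_ne hvne1]
          obtain ⟨τ', hv', hb', hc', h1', h2', hv2'⟩ :=
            ih (Function.update (Function.update f w₁ p₁) x c) DL1 DL2 1 _ _
              (le_trans (Nat.sub_le _ _) hgv) hp2 hmem'
              (hs_step hagree hs) (hbeta_step hagree hbeta) hSg1' hSg2' hSgv'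
          refine ⟨(w₁, p₁) :: (x, c) :: τ',
            valid_cons hf (valid_cons hp1 hv'),
            by rw [applySteps_cons, applySteps_cons]; exact hb', ?_, ?_, ?_, ?_⟩
          · intro z hz
            obtain ⟨h1, h2, h3⟩ := hz
            rw [recolors_cons, recolors_cons, recolors_cons, hc' z ⟨h1, h2, h3⟩,
              if_neg (Ne.symm h2), Nat.zero_add]
          · rw [recolors_cons, recolors_cons, if_pos rfl, if_neg hxw1,
              st_length_cons', if_pos hadj1, hg10, hDL10]
            simp only [Nat.zero_add, Nat.max_def] at h1' ⊢
            split_ifs at h1' ⊢ <;> omega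
          · rw [recolors_cons, recolors_cons, if_neg hw, if_neg hxw2,
              st_length_cons']
            simp only [Nat.zero_add, Nat.max_def] at h2' ⊢
            split_ifs at h2' ⊢ <;> omega
          · rw [recolors_cons, recolors_cons, if_neg (Ne.symm hvne1), if_neg hxv,
              st_length_cons']
            simp only [Nat.zero_add] at hv2' ⊢
            split_ifs at hv2' ⊢ <;> omega
    · by_cases d2 : G.Adj w₂ x ∧ c = f w₂
      · -- only w₂ triggered
        obtain ⟨hadj2, hc2⟩ := d2
        have hvne1 : v ≠ w₁ := G.ne_of_adj hvw1
        have hvne2 : v ≠ w₂ := G.ne_of_adj hvw2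
        have hg20 : g2 = 0 := by
          by_contra h
          exact (sg_head hSg2 hadj2 (by omega)) hc2
        have hfvc : f v ≠ c := fun h => (hf.2 v trivial w₂ trivial hvw2) (h.trans hc2)
        by_cases hDL2 : 0 < DL2
        · -- dodge for w₂, loose switch
          set n22 : Finset ℕ := (((st G w₂ rest).take 2).map Prod.snd).toFinset with hn22
          set B₂ : Finset ℕ := ((G.neighborFinset w₂).erase v).image f ∪ {c} ∪ n22 with hB₂
          have hB₂card : B₂.card ≤ 5 := by
            have h1 := card_union3 (((G.neighborFinset w₂).erase v).image f) {c} n22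
            have h2 := Finset.card_image_le (s := (G.neighborFinset w₂).erase v) (f := f)
            have h3 := cols_card (st G w₂ rest) 2
            simp only [Finset.card_singleton] at h1
            rw [← hn22] at h3
            rw [hB₂]
            omega
          set S₂ : Finset ℕ := if (L w₂ \ B₂).card ≤ 1 then L w₂ \ B₂ else ∅ with hS₂
          set nv1 : Finset ℕ := (((st G v ((x, c) :: rest)).take 1).map Prod.snd).toFinset
            with hnv1
          have hBdcard : ((((G.neighborFinset v).erase w₁).erase w₂).image f ∪ {c} ∪ {f w₁}
              ∪ S₂ ∪ nv1).card ≤ 5 := by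
            have h1 := card_union5 ((((G.neighborFinset v).erase w₁).erase w₂).image f)
              {c} {f w₁} S₂ nv1
            have h2 := Finset.card_image_le
              (s := ((G.neighborFinset v).erase w₁).erase w₂) (f := f)
            have h3 := cols_card (st G v ((x, c) :: rest)) 1
            have h4 := sif_card (L w₂) B₂
            rw [← hS₂] at h4
            simp only [Finset.card_singleton] at h1
            rw [← hnv1] at h3
            omega
          obtain ⟨d, hdL, hdB⟩ := exists_pick (hL v) hBdcard
          simp only [Finset.mem_union, Finset.mem_image, Finset.mem_singleton, not_or] at hdB
          obtain ⟨⟨⟨⟨hdrest, hdc⟩, hdw1⟩, hdS2⟩, hdnv⟩ := hdB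
          have hdnb : ∀ z, G.Adj v z → f z ≠ d := by
            intro z hz
            by_cases hzw2 : z = w₂
            · rw [hzw2, ← hc2]; exact fun h => hdc h.symm
            · by_cases hzw1 : z = w₁
              · rw [hzw1]; exact fun h => hdw1 h.symm
              · intro h
                exact hdrest ⟨z, Finset.mem_erase.2 ⟨hzw2, Finset.mem_erase.2
                  ⟨hzw1, (SimpleGraph.mem_neighborFinset G v z).2 hz⟩⟩, h⟩
          have hp1 : ProperOn G L Set.univ (Function.update f v d) :=
            proper_update_univ hf hdL hdnb
          obtain ⟨p₂, hp₂L, hp₂B, hp₂d⟩ :=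
            exists_pick2 (hL w₂) hB₂card (by rw [← hS₂]; exact hdS2)
          rw [hB₂] at hp₂B
          simp only [Finset.mem_union, Finset.mem_image, Finset.mem_singleton, not_or] at hp₂B
          obtain ⟨⟨hp₂img, hp₂c⟩, hp₂n22⟩ := hp₂B
          have hp₂nb : ∀ z, G.Adj w₂ z → Function.update f v d z ≠ p₂ := by
            intro z hz
            by_cases hzv : z = v
            · rw [hzv, Function.update_self]; exact Ne.symm hp₂d
            · rw [Function.update_of_ne hzv]
              exact fun h => hp₂img ⟨z, adj_w_mem_erase hz hzv, h⟩
          have hp2 : ProperOn G L Set.univ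
              (Function.update (Function.update f v d) w₂ p₂) :=
            proper_update_univ hp1 hp₂L hp₂nb
          have hnb3 : ∀ z, G.Adj x z →
              Function.update (Function.update f v d) w₂ p₂ z ≠ c := by
            intro z hz
            by_cases hzw2 : z = w₂
            · rw [hzw2, Function.update_self]; exact hp₂c
            · rw [Function.update_of_ne hzw2]
              by_cases hzv : z = v
              · rw [hzv, Function.update_self]; exact hdc
              · rw [Function.update_of_ne hzv]
                by_cases hzw1 : z = w₁
                · rw [hzw1]; exact fun h => d1 ⟨(hzw1 ▸ hz).symm, h.symm⟩
                · exact hcs z hz hzv hzw1 hzw2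
          have hp3 : ProperOn G L Set.univ (Function.update
              (Function.update (Function.update f v d) w₂ p₂) x c) :=
            proper_update_univ hp2 hcL hnb3
          have hagree : AgreeOn {u : V | u ≠ v ∧ u ≠ w₁ ∧ u ≠ w₂} f
              (Function.update (Function.update f v d) w₂ p₂) := by
            intro z hz
            rw [Function.update_of_ne hz.2.2, Function.update_of_ne hz.1]
          have hSg2' : Sg G w₂ 2 (Function.update
              (Function.update (Function.update f v d) w₂ p₂) x c) rest := by
            intro q hq
            rw [Function.update_of_ne (Ne.symm hxw2), Function.update_self]
            exact fun h => hp₂n22 (by rw [hn22]; exact h ▸ mem_cols hq)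
          have hSg1' : Sg G w₁ (g1 - if G.Adj w₁ x then 1 else 0) (Function.update
              (Function.update (Function.update f v d) w₂ p₂) x c) rest := by
            refine sg_congr ?_ (sg_tail' hSg1)
            rw [Function.update_of_ne (Ne.symm hxw1), Function.update_of_ne hw,
              Function.update_of_ne (Ne.symm hvne1)]
          have hSgv' : Sg G v (if G.Adj v x then 0 else 1) (Function.update
              (Function.update (Function.update f v d) w₂ p₂) x c) rest := by
            by_cases hvx : G.Adj v x
            · rw [if_pos hvx]; exact sg_zero v _ rest
            · rw [if_neg hvx]
              intro q hq
              rw [Function.update_of_ne (Ne.symm hxv), Function.update_of_ne hvne2,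
                Function.update_self]
              refine fun h => hdnv ?_
              rw [hnv1, st_cons, if_neg hvx]
              exact h ▸ mem_cols hq
          obtain ⟨τ', hv', hb', hc', h1', h2', hv2'⟩ :=
            ih (Function.update (Function.update (Function.update f v d) w₂ p₂) x c)
              DL1 (DL2 - 1) _ 2 _ (by split_ifs <;> omega) hp3 hmem'
              (hs_step hagree hs) (hbeta_step hagree hbeta) hSg1' hSg2' hSgv'
          refine ⟨(v, d) :: (w₂, p₂) :: (x, c) :: τ',
            valid_cons hf (valid_cons hp1 (valid_cons hp2 hv')),
            by rw [applySteps_cons, applySteps_cons, applySteps_cons]; exact hb', ?_, ?_, ?_, ?_⟩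
          · intro z hz
            obtain ⟨h1, h2, h3⟩ := hz
            rw [recolors_cons, recolors_cons, recolors_cons, recolors_cons,
              hc' z ⟨h1, h2, h3⟩, if_neg (Ne.symm h1), if_neg (Ne.symm h3)]
            simp only [Nat.zero_add]
          · rw [recolors_cons, recolors_cons, recolors_cons, if_neg hvne1,
              if_neg (Ne.symm hw), if_neg hxw1, st_length_cons']
            simp only [Nat.zero_add, Nat.max_def] at h1' ⊢
            split_ifs at h1' ⊢ <;> omega
          · rw [recolors_cons, recolors_cons, recolors_cons, if_neg hvne2, if_pos rfl,
              if_neg hxw2, st_length_cons', if_pos hadj2, hg20]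
            simp only [Nat.zero_add, Nat.max_def] at h2' ⊢
            split_ifs at h2' ⊢ <;> omega
          · rw [recolors_cons, recolors_cons, recolors_cons, if_pos rfl,
              if_neg (Ne.symm hvne2), if_neg hxv, st_length_cons']
            simp only [Nat.zero_add] at hv2' ⊢
            split_ifs at hv2' ⊢ <;> omega
        · -- tight switch for w₂
          have hDL20 : DL2 = 0 := by omega
          set n21 : Finset ℕ := (((st G w₂ rest).take 1).map Prod.snd).toFinset with hn21
          have hBcard : ((G.neighborFinset w₂).image f ∪ {c} ∪ n21).card ≤ 5 := by
            have h1 := card_union3 ((G.neighborFinset w₂).image f) {c} n21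
            have h2 := Finset.card_image_le (s := G.neighborFinset w₂) (f := f)
            have h3 := cols_card (st G w₂ rest) 1
            simp only [Finset.card_singleton] at h1
            rw [← hn21] at h3
            omega
          obtain ⟨p₂, hpL, hpB⟩ := exists_pick (hL w₂) hBcard
          simp only [Finset.mem_union, Finset.mem_image, Finset.mem_singleton, not_or] at hpB
          obtain ⟨⟨hpnb, hpc⟩, hpn⟩ := hpB
          have hpnb' : ∀ z, G.Adj w₂ z → f z ≠ p₂ := fun z hz hzc =>
            hpnb ⟨z, (SimpleGraph.mem_neighborFinset G w₂ z).2 hz, hzc⟩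
          have hp1 : ProperOn G L Set.univ (Function.update f w₂ p₂) :=
            proper_update_univ hf hpL hpnb'
          have hnb2 : ∀ z, G.Adj x z → Function.update f w₂ p₂ z ≠ c := by
            intro z hz
            by_cases hzw2 : z = w₂
            · rw [hzw2, Function.update_self]; exact hpc
            · rw [Function.update_of_ne hzw2]
              by_cases hzv : z = v
              · rw [hzv]; exact hfvc
              · by_cases hzw1 : z = w₁
                · rw [hzw1]; exact fun h => d1 ⟨(hzw1 ▸ hz).symm, h.symm⟩
                · exact hcs z hz hzv hzw1 hzw2
          have hp2 : ProperOn G L Set.univ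
              (Function.update (Function.update f w₂ p₂) x c) :=
            proper_update_univ hp1 hcL hnb2
          have hagree : AgreeOn {u : V | u ≠ v ∧ u ≠ w₁ ∧ u ≠ w₂} f
              (Function.update f w₂ p₂) := agreeOn_update_notmem (by simp) p₂
          have hSg2' : Sg G w₂ 1 (Function.update (Function.update f w₂ p₂) x c) rest := by
            intro q hq
            rw [Function.update_of_ne (Ne.symm hxw2), Function.update_self]
            exact fun h => hpn (by rw [hn21]; exact h ▸ mem_cols hq)
          have hSg1' : Sg G w₁ (g1 - if G.Adj w₁ x then 1 else 0)
              (Function.update (Function.update f w₂ p₂) x c) rest := by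
            refine sg_congr ?_ (sg_tail' hSg1)
            rw [Function.update_of_ne (Ne.symm hxw1), Function.update_of_ne hw]
          have hSgv' : Sg G v (gv - if G.Adj v x then 1 else 0)
              (Function.update (Function.update f w₂ p₂) x c) rest := by
            refine sg_congr ?_ (sg_tail' hSgv)
            rw [Function.update_of_ne (Ne.symm hxv), Function.update_of_ne hvne2]
          obtain ⟨τ', hv', hb', hc', h1', h2', hv2'⟩ :=
            ih (Function.update (Function.update f w₂ p₂) x c) DL1 DL2 _ 1 _
              (le_trans (Nat.sub_le _ _) hgv) hp2 hmem'
              (hs_step hagree hs) (hbeta_step hagree hbeta) hSg1' hSg2' hSgv'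
          refine ⟨(w₂, p₂) :: (x, c) :: τ',
            valid_cons hf (valid_cons hp1 hv'),
            by rw [applySteps_cons, applySteps_cons]; exact hb', ?_, ?_, ?_, ?_⟩
          · intro z hz
            obtain ⟨h1, h2, h3⟩ := hz
            rw [recolors_cons, recolors_cons, recolors_cons, hc' z ⟨h1, h2, h3⟩,
              if_neg (Ne.symm h3), Nat.zero_add]
          · rw [recolors_cons, recolors_cons, if_neg (Ne.symm hw), if_neg hxw1,
              st_length_cons']
            simp only [Nat.zero_add, Nat.max_def] at h1' ⊢
            split_ifs at h1' ⊢ <;> omega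
          · rw [recolors_cons, recolors_cons, if_pos rfl, if_neg hxw2,
              st_length_cons', if_pos hadj2, hg20, hDL20]
            simp only [Nat.zero_add, Nat.max_def] at h2' ⊢
            split_ifs at h2' ⊢ <;> omega
          · rw [recolors_cons, recolors_cons, if_neg (Ne.symm hvne2), if_neg hxv,
              st_length_cons']
            simp only [Nat.zero_add] at hv2' ⊢
            split_ifs at hv2' ⊢ <;> omega
      · by_cases dv : G.Adj v x ∧ c = f v
        · -- v-death: recolor v just before the step
          have hvne1 : v ≠ w₁ := G.ne_of_adj hvw1
          have hvne2 : v ≠ w₂ := G.ne_of_adj hvw2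
          have hgv0 : gv = 0 := by
            by_contra h
            exact (sg_head hSgv dv.1 (by omega)) dv.2
          set nv1 : Finset ℕ := (((st G v rest).take 1).map Prod.snd).toFinset with hnv1
          have hnv1card : nv1.card ≤ 1 := by
            refine le_trans (List.toFinset_card_le _) ?_
            simp [List.length_take]
          have hBvcard : ((G.neighborFinset v).image f ∪ {c} ∪ nv1).card ≤ 5 := by
            have h1 := Finset.card_union_le ((G.neighborFinset v).image f ∪ {c}) nv1
            have h2 := Finset.card_union_le ((G.neighborFinset v).image f) ({c} : Finset ℕ)
            have h3 := Finset.card_image_le (s := G.neighborFinset v) (f := f)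
            simp only [Finset.card_singleton] at h2
            omega
          obtain ⟨pv, hpvL, hpvB⟩ := exists_pick (hL v) hBvcard
          simp only [Finset.mem_union, Finset.mem_image, Finset.mem_singleton, not_or] at hpvB
          obtain ⟨⟨hpnb, hpc⟩, hpn1⟩ := hpvB
          have hpnb' : ∀ z, G.Adj v z → f z ≠ pv := by
            intro z hz hzc
            exact hpnb ⟨z, (SimpleGraph.mem_neighborFinset G v z).2 hz, hzc⟩
          have hp1 : ProperOn G L Set.univ (Function.update f v pv) :=
            proper_update_univ hf hpvL hpnb'
          have hnb2 : ∀ z, G.Adj x z → Function.update f v pv z ≠ c := by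
            intro z hz
            by_cases hzv : z = v
            · rw [hzv, Function.update_self]
              exact fun h => hpc h
            · rw [Function.update_of_ne hzv]
              by_cases hzw1 : z = w₁
              · rw [hzw1]; exact fun h => d1 ⟨(hzw1 ▸ hz).symm, h.symm⟩
              · by_cases hzw2 : z = w₂
                · rw [hzw2]; exact fun h => d2 ⟨(hzw2 ▸ hz).symm, h.symm⟩
                · exact hcs z hz hzv hzw1 hzw2
          have hp2 : ProperOn G L Set.univ
              (Function.update (Function.update f v pv) x c) :=
            proper_update_univ hp1 hcL hnb2
          have hagree : AgreeOn {u : V | u ≠ v ∧ u ≠ w₁ ∧ u ≠ w₂} f (Function.update f v pv) :=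
            agreeOn_update_notmem (by simp) pv
          have hSg1' : Sg G w₁ (g1 - if G.Adj w₁ x then 1 else 0)
              (Function.update (Function.update f v pv) x c) rest := by
            refine sg_congr ?_ (sg_tail' hSg1)
            rw [Function.update_of_ne (Ne.symm hxw1), Function.update_of_ne (Ne.symm hvne1)]
          have hSg2' : Sg G w₂ (g2 - if G.Adj w₂ x then 1 else 0)
              (Function.update (Function.update f v pv) x c) rest := by
            refine sg_congr ?_ (sg_tail' hSg2)
            rw [Function.update_of_ne (Ne.symm hxw2), Function.update_of_ne (Ne.symm hvne2)]
          have hSgv' : Sg G v 1 (Function.update (Function.update f v pv) x c) rest := by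
            intro q hq
            rw [Function.update_of_ne (Ne.symm hxv), Function.update_self]
            intro h
            exact hpn1 (by
              rw [hnv1]
              exact List.mem_toFinset.2 (h ▸ List.mem_map_of_mem (f := Prod.snd) hq))
          obtain ⟨τ', hv', hb', hc', h1', h2', hv2'⟩ :=
            ih (Function.update (Function.update f v pv) x c) DL1 DL2 _ _ _
              le_rfl hp2 hmem' (hs_step hagree hs) (hbeta_step hagree hbeta)
              hSg1' hSg2' hSgv'
          refine ⟨(v, pv) :: (x, c) :: τ',
            valid_cons hf (valid_cons hp1 hv'), by rw [applySteps_cons, applySteps_cons]; exact hb',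
            ?_, ?_, ?_, ?_⟩
          · intro z hz
            obtain ⟨h1, h2, h3⟩ := hz
            rw [recolors_cons, recolors_cons, recolors_cons, hc' z ⟨h1, h2, h3⟩,
              if_neg (Ne.symm h1), Nat.zero_add]
          · rw [recolors_cons, recolors_cons, if_neg hvne1, if_neg hxw1, st_length_cons']
            simp only [Nat.zero_add, Nat.max_def] at h1' ⊢
            split_ifs at h1' ⊢ <;> omega
          · rw [recolors_cons, recolors_cons, if_neg hvne2, if_neg hxw2, st_length_cons']
            simp only [Nat.zero_add, Nat.max_def] at h2' ⊢
            split_ifs at h2' ⊢ <;> omega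
          · rw [recolors_cons, recolors_cons, if_pos rfl, if_neg hxv,
              st_length_cons', if_pos dv.1, hgv0]
            rw [Nat.zero_add]
            omega
        · -- plain step, no insertions
          have hnb : ∀ z, G.Adj x z → f z ≠ c := by
            intro z hz
            by_cases hzv : z = v
            · subst hzv
              exact fun h => dv ⟨hz.symm, h.symm⟩
            · by_cases hzw1 : z = w₁
              · subst hzw1
                exact fun h => d1 ⟨hz.symm, h.symm⟩
              · by_cases hzw2 : z = w₂
                · subst hzw2
                  exact fun h => d2 ⟨hz.symm, h.symm⟩
                · exact hcs z hz hzv hzw1 hzw2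
          have hf1 : ProperOn G L Set.univ (Function.update f x c) :=
            proper_update_univ hf hcL hnb
          have hSg1' : Sg G w₁ (g1 - if G.Adj w₁ x then 1 else 0) (Function.update f x c) rest :=
            sg_update_ne hxw1 (sg_tail' hSg1)
          have hSg2' : Sg G w₂ (g2 - if G.Adj w₂ x then 1 else 0) (Function.update f x c) rest :=
            sg_update_ne hxw2 (sg_tail' hSg2)
          have hSgv' : Sg G v (gv - if G.Adj v x then 1 else 0) (Function.update f x c) rest :=
            sg_update_ne hxv (sg_tail' hSgv)
          obtain ⟨τ', hv', hb', hc', h1', h2', hv2'⟩ :=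
            ih (Function.update f x c) DL1 DL2 _ _ _
              (le_trans (Nat.sub_le _ _) hgv) hf1 hmem'
              (hs_step (fun z hz => rfl) hs) (hbeta_step (fun z hz => rfl) hbeta)
              hSg1' hSg2' hSgv'
          refine ⟨(x, c) :: τ', valid_cons hf hv', by rwa [applySteps_cons], ?_, ?_, ?_, ?_⟩
          · intro z hz
            rw [recolors_cons, recolors_cons, hc' z hz]
          · rw [recolors_cons, if_neg hxw1, st_length_cons', Nat.zero_add]
            simp only [Nat.max_def] at h1' ⊢
            split_ifs at h1' ⊢ <;> omega
          · rw [recolors_cons, if_neg hxw2, st_length_cons', Nat.zero_add]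
            simp only [Nat.max_def] at h2' ⊢
            split_ifs at h2' ⊢ <;> omega
          · rw [recolors_cons, if_neg hxv, st_length_cons', Nat.zero_add]
            split_ifs at hv2' ⊢ <;> omega

theorem stream_le {G : SimpleGraph V} [DecidableRel G.Adj] {σ' : List (V × ℕ)} {y : V}
    (t : Finset V) (hmem : ∀ q ∈ σ', G.Adj y q.1 → q.1 ∈ t)
    (hcnt : ∀ u, recolors σ' u ≤ 12) :
    (st G y σ').length ≤ 12 * t.card := by
  have h1 := length_filter_le_sum σ' t (fun q => decide (G.Adj y q.1))
    (fun q hq hpq => hmem q hq (by simpa using hpq))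
  have h2 : ∑ x ∈ t, σ'.countP (fun q => decide (q.1 = x)) ≤ ∑ _x ∈ t, 12 :=
    Finset.sum_le_sum (fun x _ => hcnt x)
  rw [Finset.sum_const, smul_eq_mul] at h2
  have : (st G y σ').length ≤ ∑ x ∈ t, σ'.countP (fun q => decide (q.1 = x)) := h1
  omega

end Reducible

/-- Fix a graph `G`, a 6-assignment `L`, and `L`-colorings `α`, `β`.  Suppose `G`
has a 3-vertex `v` with two 3-neighbors `w₁`, `w₂` with `w₁w₂ ∉ E(G)`, and let
`G' := G − {v, w₁, w₂}`.  If `G'` has a 12-good `L`-recoloring sequence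
transforming `α↾G'` into `β↾G'`, then `G` has a 12-good `L`-recoloring sequence
transforming `α` into `β`. -/
theorem reducible_deg3_with_two_deg3_nbrs (G : SimpleGraph V) [DecidableRel G.Adj]
    (L : V → Finset ℕ) (hL : ∀ v, (L v).card = 6)
    (α β : V → ℕ)
    (hα : ProperOn G L Set.univ α) (hβ : ProperOn G L Set.univ β)
    (v w₁ w₂ : V) (hdv : G.degree v = 3)
    (ha1 : G.Adj v w₁) (ha2 : G.Adj v w₂) (hw : w₁ ≠ w₂)
    (hd1 : G.degree w₁ = 3) (hd2 : G.degree w₂ = 3)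
    (hnadj : ¬ G.Adj w₁ w₂)
    (hind : ∃ σ' : List (V × ℕ),
      RecolSeqOn G L {u | u ≠ v ∧ u ≠ w₁ ∧ u ≠ w₂} α σ' ∧
      (∀ u, u ≠ v → u ≠ w₁ → u ≠ w₂ → applySteps α σ' u = β u) ∧
      ∀ u, recolors σ' u ≤ 12) :
    ∃ σ : List (V × ℕ),
      RecolSeqOn G L Set.univ α σ ∧
      applySteps α σ = β ∧
      ∀ u, recolors σ u ≤ 12 := by
  obtain ⟨σ', hσ', hβs, hcnt⟩ := hind
  have hNv3 : (G.neighborFinset v).card = 3 := hdv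
  have hNw13 : (G.neighborFinset w₁).card = 3 := hd1
  have hNw23 : (G.neighborFinset w₂).card = 3 := hd2
  have hw1mem : w₁ ∈ G.neighborFinset v := (SimpleGraph.mem_neighborFinset G v w₁).2 ha1
  have hw2mem : w₂ ∈ (G.neighborFinset v).erase w₁ :=
    Finset.mem_erase.2 ⟨Ne.symm hw, (SimpleGraph.mem_neighborFinset G v w₂).2 ha2⟩
  have hNve : ((G.neighborFinset v).erase w₁).card = 2 := by
    rw [Finset.card_erase_of_mem hw1mem, hNv3]
  have hNv1 : (((G.neighborFinset v).erase w₁).erase w₂).card = 1 := by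
    rw [Finset.card_erase_of_mem hw2mem, hNve]
  have hvmem1 : v ∈ G.neighborFinset w₁ := (SimpleGraph.mem_neighborFinset G w₁ v).2 ha1.symm
  have hvmem2 : v ∈ G.neighborFinset w₂ := (SimpleGraph.mem_neighborFinset G w₂ v).2 ha2.symm
  have hNw1e : ((G.neighborFinset w₁).erase v).card = 2 := by
    rw [Finset.card_erase_of_mem hvmem1, hNw13]
  have hNw2e : ((G.neighborFinset w₂).erase v).card = 2 := by
    rw [Finset.card_erase_of_mem hvmem2, hNw23]
  -- stream bounds
  have hm1 : (Reducible.st G w₁ σ').length ≤ 24 := by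
    have h := Reducible.stream_le (G := G) (σ' := σ') (y := w₁) ((G.neighborFinset w₁).erase v)
      (fun q hq hadj => Finset.mem_erase.2 ⟨(hσ'.1 q hq).1,
        (SimpleGraph.mem_neighborFinset G w₁ q.1).2 hadj⟩) hcnt
    rw [hNw1e] at h
    omega
  have hm2 : (Reducible.st G w₂ σ').length ≤ 24 := by
    have h := Reducible.stream_le (G := G) (σ' := σ') (y := w₂) ((G.neighborFinset w₂).erase v)
      (fun q hq hadj => Finset.mem_erase.2 ⟨(hσ'.1 q hq).1,
        (SimpleGraph.mem_neighborFinset G w₂ q.1).2 hadj⟩) hcnt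
    rw [hNw2e] at h
    omega
  have hmv : (Reducible.st G v σ').length ≤ 12 := by
    have h := Reducible.stream_le (G := G) (σ' := σ') (y := v)
      (((G.neighborFinset v).erase w₁).erase w₂)
      (fun q hq hadj => Finset.mem_erase.2 ⟨(hσ'.1 q hq).2.2, Finset.mem_erase.2
        ⟨(hσ'.1 q hq).2.1, (SimpleGraph.mem_neighborFinset G v q.1).2 hadj⟩⟩) hcnt
    rw [hNv1] at h
    omega
  obtain ⟨τ, hvalid, hfinal, hcs, h1, h2, hv⟩ :=
    Reducible.main G L hL β hβ v w₁ w₂ ha1 ha2 hw hnadj hNv1 hNv3 hNw1e hNw13 hNw2e hNw23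
      σ' α 2 2 0 0 0 (by omega) hα hσ'.1 hσ'.2
      (fun z hz => hβs z hz.1 hz.2.1 hz.2.2) (Reducible.sg_zero w₁ α σ') (Reducible.sg_zero w₂ α σ')
      (Reducible.sg_zero v α σ')
  refine ⟨τ, ⟨fun q _ => trivial, hvalid⟩, hfinal, ?_⟩
  intro u
  by_cases huv : u = v
  · subst huv
    omega
  · by_cases huw1 : u = w₁
    · subst huw1
      simp only [Nat.max_def] at h1
      split_ifs at h1 <;> omega
    · by_cases huw2 : u = w₂
      · subst huw2
        simp only [Nat.max_def] at h2
        split_ifs at h2 <;> omega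
      · rw [hcs u ⟨huv, huw1, huw2⟩]
        exact hcnt u
end
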